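/- arXiv:1104.3226 — 2 statements merged into one kernel-verified Lean document; each statement's English description precedes it below -/
import Mathlib

section
/- Let p be an odd prime and G₄ = ⟨x,y,z,w | x^p=y^p=z^p=w^p=1, [x,y]=z, all other commutators among generators trivial⟩, the extraspecial group of order p³ times ℤ_p, of order p⁴ with μ(G₄) = p² + p. Then there is no group E of order p⁵ with a central subgroup N of order p such that E/N ≅ G₄ and μ(E) < μ(G₄); i.e., G₄ does not arise as a distinguished quotient of any central extension of order p⁵. -/
/-- The minimal degree of a finite group `G`: the least `n` such that `G` embeds in `Sym(n)`. -/
noncomputable def minDeg (G : Type*) [Group G] : ℕ :=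
  sInf {n | ∃ f : G →* Equiv.Perm (Fin n), Function.Injective f}

/-- Commutator `[a,b] = a⁻¹b⁻¹ab`. -/
def comm' {G : Type*} [Group G] (a b : G) : G := a⁻¹ * b⁻¹ * a * b

namespace G4defs

/-- Free generators: `0 ↦ x`, `1 ↦ y`, `2 ↦ z`, `3 ↦ w`. -/
abbrev x : FreeGroup (Fin 4) := FreeGroup.of 0
abbrev y : FreeGroup (Fin 4) := FreeGroup.of 1
abbrev z : FreeGroup (Fin 4) := FreeGroup.of 2
abbrev w : FreeGroup (Fin 4) := FreeGroup.of 3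

/-- Relations of `G₄ = ⟨x,y,z,w | x^p=y^p=z^p=w^p=1, [x,y]=z, all other commutators among
generators trivial⟩`. -/
def rels (p : ℕ) : Set (FreeGroup (Fin 4)) :=
  {x ^ p, y ^ p, z ^ p, w ^ p,
   comm' x y * z⁻¹,
   comm' x z, comm' x w, comm' y z, comm' y w, comm' z w}

end G4defs

/-- The group `G₄` of order `p⁴`. -/
abbrev G4 (p : ℕ) := PresentedGroup (G4defs.rels p)

/-! ### The concrete model -/

@[ext]
structure Conc (p : ℕ) where
  a : ZMod p
  b : ZMod p
  c : ZMod p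
  d : ZMod p

namespace Conc

variable {p : ℕ}

instance : One (Conc p) := ⟨⟨0, 0, 0, 0⟩⟩
instance : Mul (Conc p) := ⟨fun g h => ⟨g.a + h.a, g.b + h.b, g.c + h.c - g.b * h.a, g.d + h.d⟩⟩
instance : Inv (Conc p) := ⟨fun g => ⟨-g.a, -g.b, -g.c - g.a * g.b, -g.d⟩⟩

@[simp] lemma one_a : (1 : Conc p).a = 0 := rfl
@[simp] lemma one_b : (1 : Conc p).b = 0 := rfl
@[simp] lemma one_c : (1 : Conc p).c = 0 := rfl
@[simp] lemma one_d : (1 : Conc p).d = 0 := rfl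
@[simp] lemma mul_a (g h : Conc p) : (g * h).a = g.a + h.a := rfl
@[simp] lemma mul_b (g h : Conc p) : (g * h).b = g.b + h.b := rfl
@[simp] lemma mul_c (g h : Conc p) : (g * h).c = g.c + h.c - g.b * h.a := rfl
@[simp] lemma mul_d (g h : Conc p) : (g * h).d = g.d + h.d := rfl
@[simp] lemma inv_a (g : Conc p) : (g⁻¹).a = -g.a := rfl
@[simp] lemma inv_b (g : Conc p) : (g⁻¹).b = -g.b := rfl
@[simp] lemma inv_c (g : Conc p) : (g⁻¹).c = -g.c - g.a * g.b := rfl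
@[simp] lemma inv_d (g : Conc p) : (g⁻¹).d = -g.d := rfl

instance : Group (Conc p) where
  mul_assoc g h k := by ext <;> simp <;> ring
  one_mul g := by ext <;> simp
  mul_one g := by ext <;> simp
  inv_mul_cancel g := by ext <;> simp <;> ring

/-- Generators of the concrete group. -/
def X : Conc p := ⟨1, 0, 0, 0⟩
def Y : Conc p := ⟨0, 1, 0, 0⟩
def Zc : Conc p := ⟨0, 0, 1, 0⟩
def W : Conc p := ⟨0, 0, 0, 1⟩

lemma X_pow (n : ℕ) : (X : Conc p) ^ n = ⟨(n : ZMod p), 0, 0, 0⟩ := by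
  induction n with
  | zero => ext <;> simp [X]
  | succ n ih => rw [pow_succ, ih]; ext <;> simp [X] <;> ring

lemma Y_pow (n : ℕ) : (Y : Conc p) ^ n = ⟨0, (n : ZMod p), 0, 0⟩ := by
  induction n with
  | zero => ext <;> simp [Y]
  | succ n ih => rw [pow_succ, ih]; ext <;> simp [Y] <;> ring

lemma central_pow (c d : ZMod p) (n : ℕ) :
    (⟨0, 0, c, d⟩ : Conc p) ^ n = ⟨0, 0, (n : ZMod p) * c, (n : ZMod p) * d⟩ := by
  induction n with
  | zero => ext <;> simp
  | succ n ih => rw [pow_succ, ih]; ext <;> simp <;> ring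

lemma Zc_pow (n : ℕ) : (Zc : Conc p) ^ n = ⟨0, 0, (n : ZMod p), 0⟩ := by
  rw [Zc, central_pow]; ext <;> simp

lemma W_pow (n : ℕ) : (W : Conc p) ^ n = ⟨0, 0, 0, (n : ZMod p)⟩ := by
  rw [W, central_pow]; ext <;> simp

lemma comm'_eq (g h : Conc p) : comm' g h = ⟨0, 0, g.a * h.b - g.b * h.a, 0⟩ := by
  ext <;> simp [comm'] <;> ring

lemma comm'_X_Y : comm' (X : Conc p) (Y) = Zc := by
  rw [comm'_eq]; ext <;> simp [X, Y, Zc]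

lemma comm'_mem_zpowers (hp : p.Prime) (g h : Conc p) :
    comm' g h ∈ Subgroup.zpowers (Zc : Conc p) := by
  haveI : NeZero p := ⟨hp.pos.ne'⟩
  rw [comm'_eq]
  refine ⟨(((g.a * h.b - g.b * h.a).val : ℕ) : ℤ), ?_⟩
  show (Zc : Conc p) ^ ((((g.a * h.b - g.b * h.a).val : ℕ)) : ℤ) = _
  rw [zpow_natCast, Zc_pow]
  ext <;> simp [ZMod.natCast_val, ZMod.cast_id]

lemma central_mem_center (c d : ZMod p) : (⟨0, 0, c, d⟩ : Conc p) ∈ Subgroup.center (Conc p) := by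
  rw [Subgroup.mem_center_iff]
  intro g; ext <;> simp <;> ring

lemma mem_center_eq (g : Conc p) (hg : g ∈ Subgroup.center (Conc p)) (hp : p.Prime) :
    g.a = 0 ∧ g.b = 0 := by
  rw [Subgroup.mem_center_iff] at hg
  have hb : g.b = 0 := by
    have h := congrArg Conc.c (hg X)
    simp [X] at h
    linear_combination h
  have ha : g.a = 0 := by
    have h := congrArg Conc.c (hg Y)
    simp [Y] at h
    linear_combination h
  exact ⟨ha, hb⟩

lemma center_pow_p (hp : p.Prime) (g : Conc p) (hg : g ∈ Subgroup.center (Conc p)) :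
    g ^ p = 1 := by
  obtain ⟨ha, hb⟩ := mem_center_eq g hg hp
  have : g = ⟨0, 0, g.c, g.d⟩ := by ext <;> simp [ha, hb]
  rw [this, central_pow]
  ext <;> simp

/-- The concrete group is finite of order `p ^ 4`. -/
def equivProd : Conc p ≃ (ZMod p × ZMod p × ZMod p × ZMod p) where
  toFun g := (g.a, g.b, g.c, g.d)
  invFun t := ⟨t.1, t.2.1, t.2.2.1, t.2.2.2⟩
  left_inv g := by ext <;> rfl
  right_inv t := rfl

instance [NeZero p] : Fintype (Conc p) := Fintype.ofEquiv _ equivProd.symm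
instance [NeZero p] : Finite (Conc p) := Finite.of_equiv _ equivProd.symm

lemma card_conc (hp : p.Prime) : Nat.card (Conc p) = p ^ 4 := by
  haveI : NeZero p := ⟨hp.pos.ne'⟩
  rw [Nat.card_congr equivProd]
  simp [Nat.card_prod, Nat.card_zmod]
  ring

lemma Zc_ne_one (hp : p.Prime) : (Zc : Conc p) ≠ 1 := by
  haveI : NeZero p := ⟨hp.pos.ne'⟩
  haveI : Fact (1 < p) := ⟨hp.one_lt⟩
  intro h
  have := congrArg Conc.c h
  simp [Zc] at this

lemma Zc_pow_p : (Zc : Conc p) ^ p = 1 := by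
  rw [Zc_pow]; ext <;> simp

lemma card_zpowers_Zc (hp : p.Prime) : Nat.card (Subgroup.zpowers (Zc : Conc p)) ≤ p := by
  haveI : NeZero p := ⟨hp.pos.ne'⟩
  rw [Nat.card_zpowers]
  exact Nat.le_of_dvd hp.pos (orderOf_dvd_of_pow_eq_one Zc_pow_p)

lemma card_center_ge (hp : p.Prime) : p ^ 2 ≤ Nat.card (Subgroup.center (Conc p)) := by
  haveI : NeZero p := ⟨hp.pos.ne'⟩
  have hinj : Function.Injective
      (fun t : ZMod p × ZMod p => (⟨⟨0, 0, t.1, t.2⟩, central_mem_center t.1 t.2⟩ :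
        Subgroup.center (Conc p))) := by
    intro t₁ t₂ h
    have h1 := congrArg (fun s : Subgroup.center (Conc p) => (s : Conc p).c) h
    have h2 := congrArg (fun s : Subgroup.center (Conc p) => (s : Conc p).d) h
    simp at h1 h2
    exact Prod.ext h1 h2
  calc p ^ 2 = Nat.card (ZMod p × ZMod p) := by simp [Nat.card_prod, Nat.card_zmod]; ring
  _ ≤ _ := Nat.card_le_card_of_injective _ hinj

end Conc

namespace G4iso

open G4defs Conc

variable {p : ℕ}

/-! ### Generators and relations of `G4 p` -/

def x4 : G4 p := PresentedGroup.of 0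
def y4 : G4 p := PresentedGroup.of 1
def z4 : G4 p := PresentedGroup.of 2
def w4 : G4 p := PresentedGroup.of 3

lemma mk_rel {r : FreeGroup (Fin 4)} (h : r ∈ rels p) :
    PresentedGroup.mk (rels p) r = 1 :=
  (QuotientGroup.eq_one_iff r).mpr (Subgroup.subset_normalClosure h)

lemma mem_rels_1 : x ^ p ∈ rels p := by simp [rels]
lemma mem_rels_2 : y ^ p ∈ rels p := by simp [rels]
lemma mem_rels_3 : z ^ p ∈ rels p := by simp [rels]
lemma mem_rels_4 : w ^ p ∈ rels p := by simp [rels]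
lemma mem_rels_5 : comm' x y * z⁻¹ ∈ rels p := by simp [rels]
lemma mem_rels_6 : comm' x z ∈ rels p := by simp [rels]
lemma mem_rels_7 : comm' x w ∈ rels p := by simp [rels]
lemma mem_rels_8 : comm' y z ∈ rels p := by simp [rels]
lemma mem_rels_9 : comm' y w ∈ rels p := by simp [rels]
lemma mem_rels_10 : comm' z w ∈ rels p := by simp [rels]

lemma map_comm' {G H : Type*} [Group G] [Group H] (f : G →* H) (a b : G) :
    f (comm' a b) = comm' (f a) (f b) := by simp [comm']

lemma comm'_one {G : Type*} [Group G] {a b : G} (h : comm' a b = 1) :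
    b * a = a * b := by
  have h3 : b * a * (a⁻¹ * b⁻¹ * a * b) = a * b := by group
  rw [show a⁻¹ * b⁻¹ * a * b = comm' a b from rfl, h, mul_one] at h3
  exact h3

lemma x4_pow_p : (x4 : G4 p) ^ p = 1 := by
  have := mk_rel (mem_rels_1 (p := p)); rwa [map_pow] at this

lemma y4_pow_p : (y4 : G4 p) ^ p = 1 := by
  have := mk_rel (mem_rels_2 (p := p)); rwa [map_pow] at this

lemma z4_pow_p : (z4 : G4 p) ^ p = 1 := by
  have := mk_rel (mem_rels_3 (p := p)); rwa [map_pow] at this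

lemma w4_pow_p : (w4 : G4 p) ^ p = 1 := by
  have := mk_rel (mem_rels_4 (p := p)); rwa [map_pow] at this

lemma comm_x4_y4 : comm' (x4 : G4 p) y4 = z4 := by
  have h : comm' (x4 : G4 p) y4 * z4⁻¹ = 1 := by
    have := mk_rel (mem_rels_5 (p := p))
    rwa [map_mul, map_inv, map_comm'] at this
  have h2 : comm' (x4 : G4 p) y4 * z4⁻¹ * z4 = z4 := by rw [h]; group
  rwa [inv_mul_cancel_right] at h2

lemma z4_comm_x4 : (x4 : G4 p) * z4 = z4 * x4 := by
  have h := mk_rel (mem_rels_6 (p := p))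
  rw [map_comm'] at h
  exact (comm'_one h).symm

lemma z4_comm_y4 : (y4 : G4 p) * z4 = z4 * y4 := by
  have h := mk_rel (mem_rels_8 (p := p))
  rw [map_comm'] at h
  exact (comm'_one h).symm

lemma w4_comm_x4 : (x4 : G4 p) * w4 = w4 * x4 := by
  have h := mk_rel (mem_rels_7 (p := p))
  rw [map_comm'] at h
  exact (comm'_one h).symm

lemma w4_comm_y4 : (y4 : G4 p) * w4 = w4 * y4 := by
  have h := mk_rel (mem_rels_9 (p := p))
  rw [map_comm'] at h
  exact (comm'_one h).symm

lemma w4_comm_z4 : (z4 : G4 p) * w4 = w4 * z4 := by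
  have h := mk_rel (mem_rels_10 (p := p))
  rw [map_comm'] at h
  exact (comm'_one h).symm

lemma z4_central : (z4 : G4 p) ∈ Subgroup.center (G4 p) := by
  rw [Subgroup.mem_center_iff]
  intro g
  have hg : g ∈ Subgroup.centralizer {(z4 : G4 p)} := by
    apply PresentedGroup.generated_by
    intro j
    rw [Subgroup.mem_centralizer_iff]
    intro h hh
    rw [Set.mem_singleton_iff] at hh
    subst hh
    fin_cases j
    · exact (z4_comm_x4).symm
    · exact (z4_comm_y4).symm
    · rfl
    · exact w4_comm_z4
  exact (Subgroup.mem_centralizer_iff.mp hg z4 rfl).symm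

lemma w4_central : (w4 : G4 p) ∈ Subgroup.center (G4 p) := by
  rw [Subgroup.mem_center_iff]
  intro g
  have hg : g ∈ Subgroup.centralizer {(w4 : G4 p)} := by
    apply PresentedGroup.generated_by
    intro j
    rw [Subgroup.mem_centralizer_iff]
    intro h hh
    rw [Set.mem_singleton_iff] at hh
    subst hh
    fin_cases j
    · exact (w4_comm_x4).symm
    · exact (w4_comm_y4).symm
    · exact (w4_comm_z4).symm
    · rfl
  exact (Subgroup.mem_centralizer_iff.mp hg w4 rfl).symm

lemma xy_eq : (x4 : G4 p) * y4 = y4 * x4 * z4 := by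
  have h : (x4 : G4 p)⁻¹ * y4⁻¹ * x4 * y4 = z4 := comm_x4_y4
  have h2 : y4 * x4 * ((x4 : G4 p)⁻¹ * y4⁻¹ * x4 * y4) = x4 * y4 := by group
  rw [h] at h2
  exact h2.symm

lemma yx_eq : (y4 : G4 p) * x4 = x4 * y4 * z4⁻¹ := by
  rw [xy_eq]; group

/-- `y^β x = x y^β (z^β)⁻¹` -/
lemma y_pow_x (β : ℕ) : (y4 : G4 p) ^ β * x4 = x4 * y4 ^ β * (z4 ^ β)⁻¹ := by
  induction β with
  | zero => simp
  | succ n ih =>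
    have hswap : z4⁻¹ * (y4 : G4 p) ^ n = y4 ^ n * z4⁻¹ :=
      (Subgroup.mem_center_iff.mp (Subgroup.inv_mem _ z4_central) (y4 ^ n)).symm
    calc (y4 : G4 p) ^ (n + 1) * x4
        = y4 * (y4 ^ n * x4) := by rw [pow_succ']; group
      _ = y4 * (x4 * y4 ^ n * (z4 ^ n)⁻¹) := by rw [ih]
      _ = (y4 * x4) * (y4 ^ n * (z4 ^ n)⁻¹) := by group
      _ = (x4 * y4 * z4⁻¹) * (y4 ^ n * (z4 ^ n)⁻¹) := by rw [yx_eq]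
      _ = x4 * y4 * ((z4⁻¹ * y4 ^ n) * (z4 ^ n)⁻¹) := by group
      _ = x4 * y4 * ((y4 ^ n * z4⁻¹) * (z4 ^ n)⁻¹) := by rw [hswap]
      _ = x4 * y4 ^ (n + 1) * (z4 ^ (n + 1))⁻¹ := by group

lemma pow_mod {G : Type*} [Group G] {t : G} (ht : t ^ p = 1) (m : ℕ) :
    t ^ (m % p) = t ^ m := by
  conv_rhs => rw [← Nat.div_add_mod m p]
  rw [pow_add, pow_mul, ht, one_pow, one_mul]

lemma pow_inv_eq (hp : 0 < p) {G : Type*} [Group G] {t : G} (ht : t ^ p = 1) :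
    t⁻¹ = t ^ (p - 1) := by
  refine inv_eq_of_mul_eq_one_left ?_
  have h1 : p - 1 + 1 = p := by omega
  rw [← pow_succ, h1, ht]

/-! ### Normal form -/

def IsNF (g : G4 p) : Prop := ∃ α β γ δ : ℕ, g = x4 ^ α * y4 ^ β * z4 ^ γ * w4 ^ δ

lemma isNF_one : IsNF (1 : G4 p) := ⟨0, 0, 0, 0, by simp⟩

lemma isNF_rmul_x {g : G4 p} (hp : p.Prime) (h : IsNF g) : IsNF (g * x4) := by
  obtain ⟨α, β, γ, δ, rfl⟩ := h
  refine ⟨α + 1, β, β * (p - 1) + γ, δ, ?_⟩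
  have hc1 : (z4 : G4 p) ^ γ * w4 ^ δ * x4 = x4 * (z4 ^ γ * w4 ^ δ) := by
    have : (z4 : G4 p) ^ γ * w4 ^ δ ∈ Subgroup.center (G4 p) :=
      Subgroup.mul_mem _ (Subgroup.pow_mem _ z4_central γ) (Subgroup.pow_mem _ w4_central δ)
    exact (Subgroup.mem_center_iff.mp this x4).symm
  have hzinv : ((z4 : G4 p) ^ β)⁻¹ = z4 ^ (β * (p - 1)) := by
    refine inv_eq_of_mul_eq_one_right ?_
    rw [← pow_add]
    have hβ : β + β * (p - 1) = β * p := by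
      have h1 : β * (p - 1) = β * p - β := by rw [Nat.mul_sub_one]
      have h2 : β ≤ β * p := by
        calc β = β * 1 := by omega
        _ ≤ β * p := Nat.mul_le_mul_left β hp.pos
      omega
    rw [hβ, mul_comm β p, pow_mul, z4_pow_p, one_pow]
  calc x4 ^ α * y4 ^ β * z4 ^ γ * w4 ^ δ * x4
      = x4 ^ α * y4 ^ β * (z4 ^ γ * w4 ^ δ * x4) := by group
    _ = x4 ^ α * y4 ^ β * (x4 * (z4 ^ γ * w4 ^ δ)) := by rw [hc1]
    _ = x4 ^ α * (y4 ^ β * x4) * z4 ^ γ * w4 ^ δ := by group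
    _ = x4 ^ α * (x4 * y4 ^ β * (z4 ^ β)⁻¹) * z4 ^ γ * w4 ^ δ := by rw [y_pow_x]
    _ = x4 ^ α * (x4 * y4 ^ β * z4 ^ (β * (p - 1))) * z4 ^ γ * w4 ^ δ := by rw [hzinv]
    _ = x4 ^ (α + 1) * y4 ^ β * z4 ^ (β * (p - 1) + γ) * w4 ^ δ := by group

lemma isNF_rmul_y {g : G4 p} (h : IsNF g) : IsNF (g * y4) := by
  obtain ⟨α, β, γ, δ, rfl⟩ := h
  refine ⟨α, β + 1, γ, δ, ?_⟩
  have hc1 : (z4 : G4 p) ^ γ * w4 ^ δ * y4 = y4 * (z4 ^ γ * w4 ^ δ) := by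
    have : (z4 : G4 p) ^ γ * w4 ^ δ ∈ Subgroup.center (G4 p) :=
      Subgroup.mul_mem _ (Subgroup.pow_mem _ z4_central γ) (Subgroup.pow_mem _ w4_central δ)
    exact (Subgroup.mem_center_iff.mp this y4).symm
  calc x4 ^ α * y4 ^ β * z4 ^ γ * w4 ^ δ * y4
      = x4 ^ α * y4 ^ β * (z4 ^ γ * w4 ^ δ * y4) := by group
    _ = x4 ^ α * y4 ^ β * (y4 * (z4 ^ γ * w4 ^ δ)) := by rw [hc1]
    _ = x4 ^ α * y4 ^ (β + 1) * z4 ^ γ * w4 ^ δ := by group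

lemma isNF_rmul_z {g : G4 p} (h : IsNF g) : IsNF (g * z4) := by
  obtain ⟨α, β, γ, δ, rfl⟩ := h
  refine ⟨α, β, γ + 1, δ, ?_⟩
  have hc1 : (w4 : G4 p) ^ δ * z4 = z4 * w4 ^ δ :=
    Subgroup.mem_center_iff.mp z4_central (w4 ^ δ)
  calc x4 ^ α * y4 ^ β * z4 ^ γ * w4 ^ δ * z4
      = x4 ^ α * y4 ^ β * z4 ^ γ * (w4 ^ δ * z4) := by group
    _ = x4 ^ α * y4 ^ β * z4 ^ γ * (z4 * w4 ^ δ) := by rw [hc1]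
    _ = x4 ^ α * y4 ^ β * z4 ^ (γ + 1) * w4 ^ δ := by group

lemma isNF_rmul_w {g : G4 p} (h : IsNF g) : IsNF (g * w4) := by
  obtain ⟨α, β, γ, δ, rfl⟩ := h
  exact ⟨α, β, γ, δ + 1, by group⟩


lemma gen_pow_p (i : Fin 4) : (PresentedGroup.of i : G4 p) ^ p = 1 := by
  fin_cases i
  · exact x4_pow_p
  · exact y4_pow_p
  · exact z4_pow_p
  · exact w4_pow_p

lemma isNF_rmul_gen (hp : p.Prime) (i : Fin 4) {g : G4 p} (h : IsNF g) :
    IsNF (g * PresentedGroup.of i) := by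
  fin_cases i
  · exact isNF_rmul_x hp h
  · exact isNF_rmul_y h
  · exact isNF_rmul_z h
  · exact isNF_rmul_w h

lemma isNF_rmul_gen_pow (hp : p.Prime) (i : Fin 4) (k : ℕ) {g : G4 p} (h : IsNF g) :
    IsNF (g * (PresentedGroup.of i) ^ k) := by
  induction k with
  | zero => simpa using h
  | succ n ih =>
    have : g * (PresentedGroup.of i) ^ (n + 1) =
        (g * (PresentedGroup.of i) ^ n) * PresentedGroup.of i := by
      rw [pow_succ]; group
    rw [this]
    exact isNF_rmul_gen hp i ih

lemma isNF_rmul_gen_inv (hp : p.Prime) (i : Fin 4) {g : G4 p} (h : IsNF g) :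
    IsNF (g * (PresentedGroup.of i)⁻¹) := by
  rw [pow_inv_eq hp.pos (gen_pow_p i)]
  exact isNF_rmul_gen_pow hp i (p - 1) h

lemma isNF_all (hp : p.Prime) (g : G4 p) : IsNF g := by
  have main : ∀ zz : FreeGroup (Fin 4), ∀ g : G4 p, IsNF g →
      IsNF (g * PresentedGroup.mk (rels p) zz) := by
    intro zz
    refine FreeGroup.induction_on zz ?_ ?_ ?_ ?_
    · intro g hg; simpa using hg
    · intro i g hg; exact isNF_rmul_gen hp i hg
    · intro i _ g hg
      have : PresentedGroup.mk (rels p) (FreeGroup.of i)⁻¹ = (PresentedGroup.of i : G4 p)⁻¹ := by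
        rw [map_inv]; rfl
      rw [this]
      exact isNF_rmul_gen_inv hp i hg
    · intro z1 z2 h1 h2 g hg
      rw [map_mul, ← mul_assoc]
      exact h2 _ (h1 _ hg)
  induction g using PresentedGroup.induction_on with
  | _ z => simpa using main z 1 isNF_one

/-! ### The homomorphism `θ : G4 p →* Conc p` -/

def genMap : Fin 4 → Conc p := ![Conc.X, Conc.Y, Conc.Zc, Conc.W]

lemma relsCheck : ∀ r ∈ rels p, FreeGroup.lift (genMap (p := p)) r = 1 := by
  intro r hr
  simp only [rels, Set.mem_insert_iff, Set.mem_singleton_iff] at hr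
  rcases hr with rfl | rfl | rfl | rfl | rfl | rfl | rfl | rfl | rfl | rfl
  · rw [map_pow, FreeGroup.lift_apply_of]
    show (Conc.X : Conc p) ^ p = 1
    rw [Conc.X_pow]; ext <;> simp
  · rw [map_pow, FreeGroup.lift_apply_of]
    show (Conc.Y : Conc p) ^ p = 1
    rw [Conc.Y_pow]; ext <;> simp
  · rw [map_pow, FreeGroup.lift_apply_of]
    show (Conc.Zc : Conc p) ^ p = 1
    rw [Conc.Zc_pow]; ext <;> simp
  · rw [map_pow, FreeGroup.lift_apply_of]
    show (Conc.W : Conc p) ^ p = 1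
    rw [Conc.W_pow]; ext <;> simp
  · rw [map_mul, map_inv, map_comm', FreeGroup.lift_apply_of, FreeGroup.lift_apply_of, FreeGroup.lift_apply_of]
    show comm' (Conc.X : Conc p) Conc.Y * Conc.Zc⁻¹ = 1
    rw [Conc.comm'_X_Y, mul_inv_cancel]
  · rw [map_comm', FreeGroup.lift_apply_of, FreeGroup.lift_apply_of]
    show comm' (Conc.X : Conc p) Conc.Zc = 1
    rw [Conc.comm'_eq]; ext <;> simp [Conc.X, Conc.Zc]
  · rw [map_comm', FreeGroup.lift_apply_of, FreeGroup.lift_apply_of]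
    show comm' (Conc.X : Conc p) Conc.W = 1
    rw [Conc.comm'_eq]; ext <;> simp [Conc.X, Conc.W]
  · rw [map_comm', FreeGroup.lift_apply_of, FreeGroup.lift_apply_of]
    show comm' (Conc.Y : Conc p) Conc.Zc = 1
    rw [Conc.comm'_eq]; ext <;> simp [Conc.Y, Conc.Zc]
  · rw [map_comm', FreeGroup.lift_apply_of, FreeGroup.lift_apply_of]
    show comm' (Conc.Y : Conc p) Conc.W = 1
    rw [Conc.comm'_eq]; ext <;> simp [Conc.Y, Conc.W]
  · rw [map_comm', FreeGroup.lift_apply_of, FreeGroup.lift_apply_of]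
    show comm' (Conc.Zc : Conc p) Conc.W = 1
    rw [Conc.comm'_eq]; ext <;> simp [Conc.Zc, Conc.W]

def θ : G4 p →* Conc p := PresentedGroup.toGroup relsCheck

lemma θ_x4 : θ (x4 : G4 p) = Conc.X := by
  show θ (PresentedGroup.of 0) = Conc.X
  rw [θ, PresentedGroup.toGroup.of]; rfl

lemma θ_y4 : θ (y4 : G4 p) = Conc.Y := by
  show θ (PresentedGroup.of 1) = Conc.Y
  rw [θ, PresentedGroup.toGroup.of]; rfl

lemma θ_z4 : θ (z4 : G4 p) = Conc.Zc := by
  show θ (PresentedGroup.of 2) = Conc.Zc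
  rw [θ, PresentedGroup.toGroup.of]; rfl

lemma θ_w4 : θ (w4 : G4 p) = Conc.W := by
  show θ (PresentedGroup.of 3) = Conc.W
  rw [θ, PresentedGroup.toGroup.of]; rfl

lemma conc_prod (α β γ δ : ℕ) :
    (Conc.X : Conc p) ^ α * Conc.Y ^ β * Conc.Zc ^ γ * Conc.W ^ δ =
      ⟨(α : ZMod p), (β : ZMod p), (γ : ZMod p), (δ : ZMod p)⟩ := by
  rw [Conc.X_pow, Conc.Y_pow, Conc.Zc_pow, Conc.W_pow]
  ext <;> simp

lemma θ_surjective (hp : p.Prime) : Function.Surjective (θ : G4 p →* Conc p) := by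
  haveI : NeZero p := ⟨hp.pos.ne'⟩
  intro g
  refine ⟨x4 ^ g.a.val * y4 ^ g.b.val * z4 ^ g.c.val * w4 ^ g.d.val, ?_⟩
  rw [map_mul, map_mul, map_mul, map_pow, map_pow, map_pow, map_pow, θ_x4, θ_y4, θ_z4, θ_w4,
    conc_prod]
  ext <;> simp [ZMod.natCast_rightInverse g.a, ZMod.natCast_rightInverse g.b,
    ZMod.natCast_rightInverse g.c, ZMod.natCast_rightInverse g.d]

/-- The normal-form surjection showing `|G4 p| ≤ p ^ 4`. -/
def nfMap (t : ZMod p × ZMod p × ZMod p × ZMod p) : G4 p :=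
  x4 ^ t.1.val * y4 ^ t.2.1.val * z4 ^ t.2.2.1.val * w4 ^ t.2.2.2.val

lemma nfMap_surjective (hp : p.Prime) : Function.Surjective (nfMap (p := p)) := by
  haveI : NeZero p := ⟨hp.pos.ne'⟩
  intro g
  obtain ⟨α, β, γ, δ, rfl⟩ := isNF_all hp g
  refine ⟨((α : ZMod p), (β : ZMod p), (γ : ZMod p), (δ : ZMod p)), ?_⟩
  unfold nfMap
  simp only [ZMod.val_natCast]
  rw [pow_mod x4_pow_p, pow_mod y4_pow_p, pow_mod z4_pow_p, pow_mod w4_pow_p]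

lemma finite_G4 (hp : p.Prime) : Finite (G4 p) := by
  haveI : NeZero p := ⟨hp.pos.ne'⟩
  exact Finite.of_surjective _ (nfMap_surjective hp)

lemma card_G4 (hp : p.Prime) : Nat.card (G4 p) = p ^ 4 := by
  haveI : NeZero p := ⟨hp.pos.ne'⟩
  haveI := finite_G4 hp
  refine le_antisymm ?_ ?_
  · calc Nat.card (G4 p) ≤ Nat.card (ZMod p × ZMod p × ZMod p × ZMod p) :=
        Nat.card_le_card_of_surjective _ (nfMap_surjective hp)
    _ = p ^ 4 := by simp [Nat.card_prod, Nat.card_zmod]; ring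
  · calc p ^ 4 = Nat.card (Conc p) := (Conc.card_conc hp).symm
    _ ≤ Nat.card (G4 p) := Nat.card_le_card_of_surjective _ (θ_surjective hp)

lemma θ_bijective (hp : p.Prime) : Function.Bijective (θ : G4 p →* Conc p) := by
  haveI : NeZero p := ⟨hp.pos.ne'⟩
  haveI := finite_G4 hp
  exact (Nat.bijective_iff_surjective_and_card _).mpr
    ⟨θ_surjective hp, by rw [card_G4 hp, Conc.card_conc hp]⟩

/-- The isomorphism `G4 p ≃* Conc p`. -/
noncomputable def θiso (hp : p.Prime) : G4 p ≃* Conc p :=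
  MulEquiv.ofBijective θ (θ_bijective hp)

lemma θiso_apply (hp : p.Prime) (g : G4 p) : θiso hp g = θ g := rfl

end G4iso

open Equiv Function

section Generic

variable {G : Type*} [Group G]

lemma card_ker_mul_card_range [Finite G] {H : Type*} [Group H] (φ : G →* H) :
    Nat.card φ.ker * Nat.card φ.range = Nat.card G := by
  rw [Subgroup.card_eq_card_quotient_mul_card_subgroup φ.ker,
    Nat.card_congr (QuotientGroup.quotientKerEquivRange φ).toEquiv, mul_comm]

lemma p_not_dvd_fact_sub_one {p : ℕ} (hp : p.Prime) : ¬ p ∣ (p - 1).factorial := by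
  rw [Nat.Prime.dvd_factorial hp]
  have := hp.two_le
  omega

lemma pow_card_le_p {p : ℕ} (hp : p.Prime) {d k : ℕ} (hd : d = p ^ k)
    (hdvd : d ∣ p.factorial) : d ∣ p := by
  subst hd
  rcases Nat.lt_or_ge k 2 with hk | hk
  · have : k = 0 ∨ k = 1 := by omega
    rcases this with rfl | rfl
    · simp
    · simp
  · exfalso
    have hp1 : 1 ≤ p := hp.pos
    have h2 : p ^ 2 ∣ p.factorial := dvd_trans (pow_dvd_pow p hk) hdvd
    have h3 : p.factorial = p * (p - 1).factorial := by
      conv_lhs => rw [show p = (p - 1) + 1 by omega]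
      rw [Nat.factorial_succ, show p - 1 + 1 = p by omega]
    rw [h3, pow_two] at h2
    exact p_not_dvd_fact_sub_one hp ((mul_dvd_mul_iff_left hp.pos.ne').mp h2)

/-- The image of a `p`-group in a permutation group on at most `p` points has order
dividing `p`. -/
lemma card_range_dvd_p {p M : ℕ} (hp : p.Prime) [Finite G] (hG : Nat.card G ∣ p ^ M)
    {β : Type*} [Finite β] (hβ : Nat.card β ≤ p) (ρ : G →* Perm β) :
    Nat.card ρ.range ∣ p := by
  have h0 : Nat.card ρ.range ∣ Nat.card G :=
    ⟨Nat.card ρ.ker, by rw [← card_ker_mul_card_range ρ]; ring⟩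
  have h1 : Nat.card ρ.range ∣ p ^ M := dvd_trans h0 hG
  obtain ⟨k, _, hk⟩ := (Nat.dvd_prime_pow hp).mp h1
  have h2 : Nat.card ρ.range ∣ Nat.card (Perm β) := Subgroup.card_subgroup_dvd_card _
  have h3 : Nat.card (Perm β) = (Nat.card β).factorial := by
    haveI := Classical.decEq β
    haveI : Fintype β := Fintype.ofFinite β
    rw [Nat.card_eq_fintype_card, Nat.card_eq_fintype_card, Fintype.card_perm]
  refine pow_card_le_p hp hk ?_
  have h4 : Nat.card ρ.range ∣ (Nat.card β).factorial := h3 ▸ h2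
  exact dvd_trans h4 (Nat.factorial_dvd_factorial hβ)

lemma comm'_eq_one_of_commute {a b : G} (h : a * b = b * a) : comm' a b = 1 := by
  show a⁻¹ * b⁻¹ * a * b = 1
  rw [mul_assoc (a⁻¹ * b⁻¹) a b, h]
  group

/-- If the range of `ρ` has order dividing a prime `p`, images of commutators vanish. -/
lemma comm'_map_eq_one {p : ℕ} (hp : p.Prime) {H : Type*} [Group H] (ρ : G →* H)
    (hd : Nat.card ρ.range ∣ p) (g h : G) : ρ (comm' g h) = 1 := by
  haveI : Fact p.Prime := ⟨hp⟩
  rw [G4iso.map_comm']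
  rcases (Nat.dvd_prime hp).mp hd with h1 | h1
  · have hbot : ρ.range = ⊥ := Subgroup.eq_bot_of_card_eq _ h1
    have hg : ρ g = 1 := by
      have : ρ g ∈ ρ.range := ⟨g, rfl⟩
      rwa [hbot, Subgroup.mem_bot] at this
    have hh : ρ h = 1 := by
      have : ρ h ∈ ρ.range := ⟨h, rfl⟩
      rwa [hbot, Subgroup.mem_bot] at this
    rw [hg, hh]; simp [comm']
  · haveI : IsCyclic ρ.range := isCyclic_of_prime_card h1
    letI : CommGroup ρ.range := IsCyclic.commGroup
    have hc : (⟨ρ g, ⟨g, rfl⟩⟩ : ρ.range) * ⟨ρ h, ⟨h, rfl⟩⟩ =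
        (⟨ρ h, ⟨h, rfl⟩⟩ : ρ.range) * ⟨ρ g, ⟨g, rfl⟩⟩ := mul_comm _ _
    have hc' : ρ g * ρ h = ρ h * ρ g := congrArg Subtype.val hc
    exact comm'_eq_one_of_commute hc'

theorem _root_.Equiv.Perm.inv_apply_self {α : Type*} (f : Equiv.Perm α) (x : α) :
    f⁻¹ (f x) = x := Equiv.symm_apply_apply f x

/-- Restriction of a permutation representation to an invariant set. -/
def restrictHom {β : Type*} (f : G →* Perm β) (S : Set β)
    (hS : ∀ g : G, ∀ x ∈ S, f g x ∈ S) : G →* Perm S where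
  toFun g := (f g).subtypePerm (fun x => ⟨fun hx => by
    have h2 := hS g⁻¹ _ hx
    rwa [map_inv, Perm.inv_apply_self] at h2, fun hx => hS g x hx⟩)
  map_one' := by ext x; simp
  map_mul' g h := by ext x; simp [Perm.subtypePerm_apply]; rfl

@[simp] lemma restrictHom_apply {β : Type*} (f : G →* Perm β) (S : Set β)
    (hS : ∀ g : G, ∀ x ∈ S, f g x ∈ S) (g : G) (x : S) :
    (restrictHom f S hS g x : β) = f g x := rfl

lemma comm'_central_left (c h k : G) (hc : c ∈ Subgroup.center G) :
    comm' (c * h) k = comm' h k := by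
  have hc' : ∀ u : G, u * c = c * u := Subgroup.mem_center_iff.mp hc
  show (c * h)⁻¹ * k⁻¹ * (c * h) * k = h⁻¹ * k⁻¹ * h * k
  rw [mul_inv_rev]
  calc h⁻¹ * c⁻¹ * k⁻¹ * (c * h) * k = h⁻¹ * (c⁻¹ * (k⁻¹ * c)) * h * k := by group
  _ = h⁻¹ * (c⁻¹ * (c * k⁻¹)) * h * k := by rw [hc' k⁻¹]
  _ = h⁻¹ * k⁻¹ * h * k := by group

lemma comm'_central_right (c h k : G) (hc : c ∈ Subgroup.center G) :
    comm' h (c * k) = comm' h k := by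
  have hc' : ∀ u : G, u * c = c * u := Subgroup.mem_center_iff.mp hc
  show h⁻¹ * (c * k)⁻¹ * h * (c * k) = h⁻¹ * k⁻¹ * h * k
  rw [mul_inv_rev]
  calc h⁻¹ * (k⁻¹ * c⁻¹) * h * (c * k) = h⁻¹ * k⁻¹ * (c⁻¹ * (h * c)) * k := by group
  _ = h⁻¹ * k⁻¹ * (c⁻¹ * (c * h)) * k := by rw [hc' h]
  _ = h⁻¹ * k⁻¹ * h * k := by group

end Generic

open Equiv Function Subgroup

section Action

variable {G : Type*} [Group G] {n : ℕ}

/-- Orbit of a point under the representation `f`. -/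
def Orb (f : G →* Perm (Fin n)) (a : Fin n) : Set (Fin n) := Set.range fun g => f g a

/-- Stabilizer of a point under the representation `f`. -/
def Stab (f : G →* Perm (Fin n)) (a : Fin n) : Subgroup G :=
  Subgroup.comap f (MulAction.stabilizer (Perm (Fin n)) a)

lemma mem_Stab_iff {f : G →* Perm (Fin n)} {a : Fin n} {g : G} :
    g ∈ Stab f a ↔ f g a = a := by
  simp [Stab, MulAction.mem_stabilizer_iff, Equiv.Perm.smul_def]

lemma self_mem_Orb (f : G →* Perm (Fin n)) (a : Fin n) : a ∈ Orb f a :=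
  ⟨1, by simp⟩

lemma apply_mem_Orb (f : G →* Perm (Fin n)) (a : Fin n) (g : G) : f g a ∈ Orb f a :=
  ⟨g, rfl⟩

lemma Orb_invariant (f : G →* Perm (Fin n)) (a : Fin n) (g : G) {x : Fin n}
    (hx : x ∈ Orb f a) : f g x ∈ Orb f a := by
  obtain ⟨h, rfl⟩ := hx
  exact ⟨g * h, by simp [Perm.mul_apply]⟩

lemma Orb_eq_of_mem {f : G →* Perm (Fin n)} {a b : Fin n} (hb : b ∈ Orb f a) :
    Orb f b = Orb f a := by
  obtain ⟨h, rfl⟩ := hb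
  ext x
  constructor
  · rintro ⟨g, rfl⟩
    exact ⟨g * h, by simp [Perm.mul_apply]⟩
  · rintro ⟨g, rfl⟩
    refine ⟨g * h⁻¹, ?_⟩
    simp [Perm.mul_apply]

lemma Orb_disjoint {f : G →* Perm (Fin n)} {a b : Fin n} (hb : b ∉ Orb f a) :
    Disjoint (Orb f b) (Orb f a) := by
  rw [Set.disjoint_left]
  rintro x ⟨g, rfl⟩ hxa
  apply hb
  have := Orb_invariant f a g⁻¹ hxa
  rwa [map_inv, Perm.inv_apply_self] at this

/-- Orbit–stabilizer. -/
noncomputable def orbEquiv (f : G →* Perm (Fin n)) (a : Fin n) :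
    G ⧸ Stab f a ≃ Orb f a := by
  refine Equiv.ofBijective
    (fun q => Quotient.liftOn' q (fun g => (⟨f g a, ⟨g, rfl⟩⟩ : Orb f a)) ?_) ⟨?_, ?_⟩
  · intro g g' hgg
    have h := QuotientGroup.leftRel_apply.mp hgg
    rw [mem_Stab_iff] at h
    have heq : f g a = f g' a := by
      have h5 : f g' = f g * f (g⁻¹ * g') := by rw [← map_mul]; congr 1; group
      rw [h5, Perm.mul_apply, h]
    exact Subtype.ext heq
  · intro q q'
    induction q using Quotient.inductionOn'
    induction q' using Quotient.inductionOn'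
    rename_i g g'
    intro h
    have h2 : f g a = f g' a := congrArg Subtype.val h
    apply Quotient.sound'
    rw [QuotientGroup.leftRel_apply, mem_Stab_iff, map_mul, map_inv, Perm.mul_apply, ← h2,
      Perm.inv_apply_self]
  · rintro ⟨x, g, rfl⟩
    exact ⟨Quotient.mk'' g, rfl⟩

lemma card_Orb_mul_card_Stab [Finite G] (f : G →* Perm (Fin n)) (a : Fin n) :
    Nat.card (Orb f a) * Nat.card (Stab f a) = Nat.card G := by
  rw [← Nat.card_congr (orbEquiv f a), ← Subgroup.index_eq_card,
    Subgroup.index_mul_card]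

lemma card_Orb_dvd [Finite G] (f : G →* Perm (Fin n)) (a : Fin n) :
    Nat.card (Orb f a) ∣ Nat.card G :=
  ⟨Nat.card (Stab f a), (card_Orb_mul_card_Stab f a).symm⟩

lemma card_Orb_le (f : G →* Perm (Fin n)) (a : Fin n) : Nat.card (Orb f a) ≤ n := by
  calc Nat.card (Orb f a) ≤ Nat.card (Fin n) :=
      Nat.card_le_card_of_injective _ Subtype.val_injective
  _ = n := by simp

/-- If the orbit of `b` has at most `p` points then commutators act trivially at `b`. -/
lemma small_orbit_comm_fix {p M : ℕ} (hp : p.Prime) [Finite G] (hG : Nat.card G ∣ p ^ M)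
    (f : G →* Perm (Fin n)) {b : Fin n} (hb : Nat.card (Orb f b) ≤ p) (g h : G) :
    f (comm' g h) b = b := by
  have hρ := comm'_map_eq_one hp (restrictHom f (Orb f b) (fun g x hx => Orb_invariant f b g hx))
    (card_range_dvd_p hp hG hb _) g h
  have := congrArg (fun σ => (σ ⟨b, self_mem_Orb f b⟩ : Fin n)) hρ
  simpa using this

/-- Main setup: a faithful representation of degree `< p² + p` has a distinguished orbit
of size `p²` on which everything happens. -/
theorem rep_setup {p M : ℕ} (hp : p.Prime) [Finite G] (hG : Nat.card G ∣ p ^ M)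
    (f : G →* Perm (Fin n)) (hf : Injective f) (hn : n < p ^ 2 + p)
    (u v : G) (hζ : comm' u v ≠ 1) :
    ∃ a : Fin n, f (comm' u v) a ≠ a ∧ Nat.card (Orb f a) = p ^ 2 ∧
      ∀ b : Fin n, b ∉ Orb f a → ∀ g : G, f g b = b := by
  have hp2 : 2 ≤ p := hp.two_le
  -- find a moved point
  have hfζ : f (comm' u v) ≠ 1 := fun h => hζ (hf (by rw [h, map_one]))
  have hmove : ∃ a : Fin n, f (comm' u v) a ≠ a := by
    by_contra hcon
    push_neg at hcon
    exact hfζ (Equiv.ext hcon)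
  obtain ⟨a, ha⟩ := hmove
  have hcard : Nat.card (Orb f a) = p ^ 2 := by
    obtain ⟨k, _, hk⟩ := (Nat.dvd_prime_pow hp).mp (dvd_trans (card_Orb_dvd f a) hG)
    have hk2 : 2 ≤ k := by
      by_contra hcon
      push_neg at hcon
      have hsmall : Nat.card (Orb f a) ≤ p := by
        rw [hk]
        calc p ^ k ≤ p ^ 1 := Nat.pow_le_pow_right hp.pos (by omega)
        _ = p := pow_one p
      exact ha (small_orbit_comm_fix hp hG f hsmall u v)
    have hk2' : k ≤ 2 := by
      by_contra hcon
      push_neg at hcon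
      have h1 : p ^ 3 ≤ p ^ k := Nat.pow_le_pow_right hp.pos (by omega)
      have h3 : p ^ k ≤ n := hk ▸ card_Orb_le f a
      nlinarith [hp2]
    have : k = 2 := by omega
    rw [hk, this]
  refine ⟨a, ha, hcard, ?_⟩
  intro b hb g
  have hdisj := Orb_disjoint hb
  have hsum : Nat.card (Orb f b) + Nat.card (Orb f a) ≤ n := by
    rw [Nat.card_coe_set_eq, Nat.card_coe_set_eq, ← Set.ncard_union_eq hdisj]
    calc (Orb f b ∪ Orb f a).ncard ≤ (Set.univ : Set (Fin n)).ncard :=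
        Set.ncard_le_ncard (Set.subset_univ _) Set.finite_univ
    _ = n := by rw [Set.ncard_univ]; simp
  have hlt : Nat.card (Orb f b) < p := by omega
  obtain ⟨j, _, hj⟩ := (Nat.dvd_prime_pow hp).mp (dvd_trans (card_Orb_dvd f b) hG)
  have hj0 : j = 0 := by
    by_contra hcon
    have : p ≤ p ^ j := by
      calc p = p ^ 1 := (pow_one p).symm
      _ ≤ p ^ j := Nat.pow_le_pow_right hp.pos (by omega)
    omega
  have hone : (Orb f b).ncard = 1 := by
    rw [← Nat.card_coe_set_eq, hj, hj0, pow_zero]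
  obtain ⟨x, hx⟩ := Set.ncard_eq_one.mp hone
  have hbx : b = x := by
    have := self_mem_Orb f b
    rw [hx] at this
    exact this
  have : f g b ∈ Orb f b := apply_mem_Orb f b g
  rw [hx, ← hbx] at this
  exact this

/-- The key lemma: a group with a nontrivial commutator and center of order at least `p²`
has no faithful representation of degree `< p² + p`. -/
theorem key {p M : ℕ} (hp : p.Prime) [Finite G] (hG : Nat.card G ∣ p ^ M)
    (f : G →* Perm (Fin n)) (hf : Injective f) (hn : n < p ^ 2 + p)
    (u v : G) (hζ : comm' u v ≠ 1)
    (hZ : p ^ 2 ≤ Nat.card (Subgroup.center G)) : False := by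
  obtain ⟨a, hmove, hcard, hout⟩ := rep_setup hp hG f hf hn u v hζ
  -- a central element fixing `a` is trivial
  have hcfix : ∀ c ∈ Subgroup.center G, f c a = a → c = 1 := by
    intro c hc hca
    apply hf
    rw [map_one]
    apply Equiv.ext
    intro b
    show f c b = b
    by_cases hb : b ∈ Orb f a
    · obtain ⟨g, rfl⟩ := hb
      have hcg : c * g = g * c := (Subgroup.mem_center_iff.mp hc g).symm
      rw [← Perm.mul_apply, ← map_mul, hcg, map_mul, Perm.mul_apply, hca]
    · exact hout b hb c
  -- the center injects into the orbit of `a`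
  set ι : Subgroup.center G → Orb f a := fun c => ⟨f c a, ⟨c, rfl⟩⟩ with hι
  have hinj : Injective ι := by
    intro c₁ c₂ h
    have h2 : f c₁ a = f c₂ a := congrArg Subtype.val h
    have h3 : f ((c₁ : G)⁻¹ * c₂) a = a := by
      rw [map_mul, map_inv, Perm.mul_apply, ← h2, Perm.inv_apply_self]
    have h4 : (c₁ : G)⁻¹ * c₂ = 1 :=
      hcfix _ (Subgroup.mul_mem _ (Subgroup.inv_mem _ c₁.2) c₂.2) h3
    have : (c₁ : G) = c₂ := by
      rw [← mul_one (c₁ : G), ← h4]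
      group
    exact Subtype.ext this
  have hcards : Nat.card (Subgroup.center G) = Nat.card (Orb f a) := by
    have hle : Nat.card (Subgroup.center G) ≤ Nat.card (Orb f a) :=
      Nat.card_le_card_of_injective ι hinj
    omega
  have hbij : Bijective ι := (Nat.bijective_iff_injective_and_card ι).mpr ⟨hinj, hcards⟩
  -- write u = cu * hu, v = cv * hv with cu, cv central and hu, hv fixing a
  obtain ⟨cu, hcu⟩ := hbij.2 ⟨f u a, ⟨u, rfl⟩⟩
  obtain ⟨cv, hcv⟩ := hbij.2 ⟨f v a, ⟨v, rfl⟩⟩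
  have hcu' : f cu a = f u a := congrArg Subtype.val hcu
  have hcv' : f cv a = f v a := congrArg Subtype.val hcv
  have hufix : f ((cu : G)⁻¹ * u) a = a := by
    rw [map_mul, map_inv, Perm.mul_apply, ← hcu', Perm.inv_apply_self]
  have hvfix : f ((cv : G)⁻¹ * v) a = a := by
    rw [map_mul, map_inv, Perm.mul_apply, ← hcv', Perm.inv_apply_self]
  have hrw : comm' u v = comm' ((cu : G)⁻¹ * u) ((cv : G)⁻¹ * v) := by
    conv_lhs => rw [show u = (cu : G) * ((cu : G)⁻¹ * u) by group,
      show v = (cv : G) * ((cv : G)⁻¹ * v) by group]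
    rw [comm'_central_left _ _ _ cu.2, comm'_central_right _ _ _ cv.2]
  have hfixinv : ∀ g : G, f g a = a → f g⁻¹ a = a := by
    intro g hg
    calc f g⁻¹ a = f g⁻¹ (f g a) := by rw [hg]
    _ = a := by rw [map_inv, Perm.inv_apply_self]
  apply hmove
  rw [hrw]
  show f (((cu : G)⁻¹ * u)⁻¹ * ((cv : G)⁻¹ * v)⁻¹ * ((cu : G)⁻¹ * u) * ((cv : G)⁻¹ * v)) a = a
  rw [map_mul, map_mul, map_mul, Perm.mul_apply, Perm.mul_apply, Perm.mul_apply,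
    hvfix, hufix, hfixinv _ hvfix, hfixinv _ hufix]

end Action

open Equiv Function Subgroup
open scoped Pointwise

section CenterBig

variable {p n : ℕ} {E : Type*} [Group E]

/-- A central element fixing the base point of the big orbit is trivial. -/
lemma central_fix [Finite E] (f : E →* Perm (Fin n)) (hf : Injective f) {a : Fin n}
    (hout : ∀ b : Fin n, b ∉ Orb f a → ∀ g : E, f g b = b)
    {c : E} (hc : c ∈ Subgroup.center E) (hca : f c a = a) : c = 1 := by
  apply hf
  rw [map_one]
  apply Equiv.ext
  intro b
  show f c b = b
  by_cases hb : b ∈ Orb f a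
  · obtain ⟨g, rfl⟩ := hb
    have hcg : c * g = g * c := (Subgroup.mem_center_iff.mp hc g).symm
    rw [← Perm.mul_apply, ← map_mul, hcg, map_mul, Perm.mul_apply, hca]
  · exact hout b hb c

lemma fix_of_fix_inv {G : Type*} [Group G] (f : G →* Perm (Fin n)) {g : G} {b : Fin n}
    (h : f g b = b) : f g⁻¹ b = b := by
  calc f g⁻¹ b = f g⁻¹ (f g b) := by rw [h]
  _ = b := by rw [map_inv, Perm.inv_apply_self]

theorem centerBig [Finite E] (hp : p.Prime) (hE : Nat.card E = p ^ 5)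
    (π : E →* Conc p) (hπs : Surjective π) (hπk : Nat.card π.ker = p)
    (hkc : (π.ker : Set E) ⊆ Subgroup.center E)
    (f : E →* Perm (Fin n)) (hf : Injective f) (hn : n < p ^ 2 + p) :
    p ^ 2 ≤ Nat.card (Subgroup.center E) := by
  haveI : Fact p.Prime := ⟨hp⟩
  haveI : NeZero p := ⟨hp.pos.ne'⟩
  have hp2 : 2 ≤ p := hp.two_le
  have hG : Nat.card E ∣ p ^ 5 := hE ▸ dvd_rfl
  -- lifts of the generators and the distinguished commutator
  obtain ⟨xt, hxt⟩ := hπs Conc.X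
  obtain ⟨yt, hyt⟩ := hπs Conc.Y
  have hζπ : π (comm' xt yt) = Conc.Zc := by
    rw [G4iso.map_comm', hxt, hyt, Conc.comm'_X_Y]
  have hζ : comm' xt yt ≠ 1 := by
    intro h
    apply Conc.Zc_ne_one hp
    rw [← hζπ, h, map_one]
  obtain ⟨a, hmove, hcard, hout⟩ := rep_setup hp hG f hf hn xt yt hζ
  set H : Subgroup E := Stab f a with hHdef
  -- |H| = p³
  have hcardH : Nat.card H = p ^ 3 := by
    have h1 := card_Orb_mul_card_Stab f a
    rw [hcard, hE] at h1
    have h2 : p ^ 2 * Nat.card H = p ^ 2 * p ^ 3 := by rw [h1]; ring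
    exact Nat.eq_of_mul_eq_mul_left (by positivity) h2
  -- the central element ν of the kernel
  obtain ⟨ν, hνker, hν1⟩ : ∃ ν ∈ π.ker, ν ≠ 1 := by
    by_contra hcon
    push_neg at hcon
    have hbot : π.ker = ⊥ := (Subgroup.eq_bot_iff_forall _).mpr hcon
    rw [hbot] at hπk
    simp at hπk
    omega
  have hνc : ν ∈ Subgroup.center E := hkc hνker
  have hνp : ν ^ p = 1 := by
    have h1 : (⟨ν, hνker⟩ : π.ker) ^ Nat.card π.ker = 1 := pow_card_eq_one'
    rw [hπk] at h1
    have h2 := congrArg (Subtype.val) h1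
    simpa using h2
  have hνord : orderOf ν = p := by
    have h1 : orderOf ν ∣ p := orderOf_dvd_of_pow_eq_one hνp
    rcases (Nat.dvd_prime hp).mp h1 with h | h
    · exact absurd (orderOf_eq_one_iff.mp h) hν1
    · exact h
  have hνH : ν ∉ H := fun hmem =>
    hν1 (central_fix f hf hout hνc (mem_Stab_iff.mp hmem))
  -- ker π = zpowers ν
  have hker_eq : Subgroup.zpowers ν = π.ker := by
    apply Subgroup.eq_of_le_of_card_ge
    · rintro _ ⟨i, rfl⟩
      exact Subgroup.zpow_mem _ hνker i
    · rw [hπk, Nat.card_zpowers, hνord]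
  -- Z2 = preimage of the center of Conc
  set Z2 : Subgroup E := Subgroup.comap π (Subgroup.center (Conc p)) with hZ2def
  have hkerle : π.ker ≤ Z2 := by
    intro g hg
    rw [hZ2def, Subgroup.mem_comap, MonoidHom.mem_ker.mp hg]
    exact Subgroup.one_mem _
  have hcardZ2 : p ^ 3 ≤ Nat.card Z2 := by
    set ρ2 : Z2 →* Conc p := π.comp Z2.subtype with hρ2
    have h1 : Nat.card ρ2.ker * Nat.card ρ2.range = Nat.card Z2 := card_ker_mul_card_range ρ2
    have h2 : p ≤ Nat.card ρ2.ker := by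
      have hinj : Injective (fun g : π.ker => (⟨⟨g.1, hkerle g.2⟩, by
          rw [MonoidHom.mem_ker]
          show π (g : E) = 1
          exact MonoidHom.mem_ker.mp g.2⟩ : ρ2.ker)) := by
        intro g g' h
        have h2 := congrArg (fun s : ρ2.ker => ((s : Z2) : E)) h
        exact Subtype.ext h2
      calc p = Nat.card π.ker := hπk.symm
      _ ≤ Nat.card ρ2.ker := Nat.card_le_card_of_injective _ hinj
    have h3 : p ^ 2 ≤ Nat.card ρ2.range := by
      have hex : ∀ c : Subgroup.center (Conc p), ∃ s : ρ2.range, (s : Conc p) = c := by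
        intro c
        obtain ⟨e, he⟩ := hπs c
        refine ⟨⟨(c : Conc p), ⟨⟨e, ?_⟩, he⟩⟩, rfl⟩
        rw [hZ2def, Subgroup.mem_comap, he]
        exact c.2
      choose F hF using hex
      have hFinj : Injective F := by
        intro c c' h
        apply Subtype.ext
        rw [← hF c, ← hF c', h]
      calc p ^ 2 ≤ Nat.card (Subgroup.center (Conc p)) := Conc.card_center_ge hp
      _ ≤ Nat.card ρ2.range := Nat.card_le_card_of_injective F hFinj
    calc p ^ 3 = p * p ^ 2 := by ring
    _ ≤ Nat.card ρ2.ker * Nat.card ρ2.range := Nat.mul_le_mul h2 h3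
    _ = Nat.card Z2 := h1
  -- find a nontrivial element of Z2 ⊓ H
  obtain ⟨u, hu2, huH, hu1⟩ : ∃ u : E, u ∈ Z2 ∧ u ∈ H ∧ u ≠ 1 := by
    by_contra hcon
    push_neg at hcon
    have hinj : Injective (fun s : Z2 => f (s : E) a) := by
      intro s s' h
      have h' : f (s : E) a = f (s' : E) a := h
      have hmH : (s : E)⁻¹ * s' ∈ H := by
        rw [hHdef, mem_Stab_iff, map_mul, map_inv, Perm.mul_apply, ← h', Perm.inv_apply_self]
      have hmZ : (s : E)⁻¹ * s' ∈ Z2 := Subgroup.mul_mem _ (Subgroup.inv_mem _ s.2) s'.2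
      have h1 : (s : E)⁻¹ * s' = 1 := hcon _ hmZ hmH
      have h2 : (s : E) = s' := by
        rw [← mul_one (s : E), ← h1]
        group
      exact Subtype.ext h2
    have hle : Nat.card Z2 ≤ n := by
      calc Nat.card Z2 ≤ Nat.card (Fin n) := Nat.card_le_card_of_injective _ hinj
      _ = n := by simp
    nlinarith
  have hπu : π u ∈ Subgroup.center (Conc p) := by rwa [hZ2def, Subgroup.mem_comap] at hu2
  have hup : u ^ p ∈ π.ker := by
    rw [MonoidHom.mem_ker, map_pow]
    exact Conc.center_pow_p hp _ hπu
  have hufix : f u a = a := mem_Stab_iff.mp huH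
  have hνu : ν * u = u * ν := (Subgroup.mem_center_iff.mp hνc u).symm
  -- the abelian normal subgroup A = ⟨ν, u⟩
  set A : Subgroup E := Subgroup.closure {ν, u} with hAdef
  have hνA : ν ∈ A := Subgroup.subset_closure (Set.mem_insert _ _)
  have huA : u ∈ A := Subgroup.subset_closure (Set.mem_insert_of_mem _ rfl)
  have hmemA : ∀ g ∈ A, ∃ i j : ℤ, g = ν ^ i * u ^ j := by
    intro g hg
    rw [hAdef] at hg
    induction hg using Subgroup.closure_induction with
    | mem g hg =>
      rcases hg with rfl | rfl
      · exact ⟨1, 0, by simp⟩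
      · exact ⟨0, 1, by simp⟩
    | one => exact ⟨0, 0, by simp⟩
    | mul g g' _ _ ih ih' =>
      obtain ⟨i, j, rfl⟩ := ih
      obtain ⟨k, l, rfl⟩ := ih'
      refine ⟨i + k, j + l, ?_⟩
      have hc : u ^ j * ν ^ k = ν ^ k * u ^ j :=
        Subgroup.mem_center_iff.mp (Subgroup.zpow_mem _ hνc k) (u ^ j)
      calc ν ^ i * u ^ j * (ν ^ k * u ^ l) = ν ^ i * (u ^ j * ν ^ k) * u ^ l := by group
      _ = ν ^ i * (ν ^ k * u ^ j) * u ^ l := by rw [hc]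
      _ = ν ^ (i + k) * u ^ (j + l) := by rw [zpow_add, zpow_add]; group
    | inv g _ ih =>
      obtain ⟨i, j, rfl⟩ := ih
      refine ⟨-i, -j, ?_⟩
      have hc : u ^ (-j) * ν ^ (-i) = ν ^ (-i) * u ^ (-j) :=
        Subgroup.mem_center_iff.mp (Subgroup.zpow_mem _ hνc (-i)) (u ^ (-j))
      rw [mul_inv_rev, ← zpow_neg, ← zpow_neg, hc]
  -- u commutes with everything in A
  have hucomm : ∀ g ∈ A, g * u = u * g := by
    intro g hg
    obtain ⟨i, j, rfl⟩ := hmemA g hg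
    have hc : ν ^ i * u = u * ν ^ i :=
      (Subgroup.mem_center_iff.mp (Subgroup.zpow_mem _ hνc i) u).symm
    calc ν ^ i * u ^ j * u = ν ^ i * u * u ^ j := by group
    _ = u * ν ^ i * u ^ j := by rw [hc]
    _ = u * (ν ^ i * u ^ j) := by group
  -- A is normal
  have hAnorm : A.Normal := by
    constructor
    intro g hg e
    obtain ⟨i, j, rfl⟩ := hmemA g hg
    have hm : u⁻¹ * (e * u * e⁻¹) ∈ π.ker := by
      rw [MonoidHom.mem_ker]
      have hc : π e * π u = π u * π e := Subgroup.mem_center_iff.mp hπu (π e)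
      rw [map_mul, map_mul, map_mul, map_inv, map_inv]
      calc (π u)⁻¹ * (π e * π u * (π e)⁻¹) = (π u)⁻¹ * (π e * π u) * (π e)⁻¹ := by group
      _ = (π u)⁻¹ * (π u * π e) * (π e)⁻¹ := by rw [hc]
      _ = 1 := by group
    have hmA : u⁻¹ * (e * u * e⁻¹) ∈ A := by
      obtain ⟨k, hk⟩ : u⁻¹ * (e * u * e⁻¹) ∈ Subgroup.zpowers ν := hker_eq ▸ hm
      rw [← hk]
      exact Subgroup.zpow_mem _ hνA k
    set m : E := u⁻¹ * (e * u * e⁻¹) with hmdef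
    have hm_center : m ∈ Subgroup.center E := hkc hm
    have heu : e * u * e⁻¹ = u * m := by rw [hmdef]; group
    have heν : e * ν ^ i * e⁻¹ = ν ^ i :=
      by
        have h5 := Subgroup.mem_center_iff.mp (Subgroup.zpow_mem _ hνc i) e
        rw [h5]; group
    have hcomm_um : u * m = m * u := (Subgroup.mem_center_iff.mp hm_center u)
    have heuj : e * u ^ j * e⁻¹ = (u * m) ^ j := by
      rw [← heu]
      rw [conj_zpow]
    have humj : (u * m) ^ j = u ^ j * m ^ j := by
      have hc : Commute u m := hcomm_um
      exact hc.mul_zpow j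
    have : e * (ν ^ i * u ^ j) * e⁻¹ = ν ^ i * (u ^ j * m ^ j) := by
      calc e * (ν ^ i * u ^ j) * e⁻¹ = (e * ν ^ i * e⁻¹) * (e * u ^ j * e⁻¹) := by group
      _ = ν ^ i * ((u * m) ^ j) := by rw [heν, heuj]
      _ = ν ^ i * (u ^ j * m ^ j) := by rw [humj]
    rw [this]
    refine Subgroup.mul_mem _ (Subgroup.zpow_mem _ hνA i) (Subgroup.mul_mem _
      (Subgroup.zpow_mem _ huA j) ?_)
    obtain ⟨k, hk⟩ : m ∈ Subgroup.zpowers ν := hker_eq ▸ hm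
    rw [← hk]
    exact Subgroup.zpow_mem _ (Subgroup.zpow_mem _ hνA k) j
  haveI : A.Normal := hAnorm
  -- restriction of f to A
  set fA : A →* Perm (Fin n) := f.comp A.subtype with hfAdef
  -- if u fixes the whole big orbit, contradiction
  have ufix_contra : ¬ (Orb f a ⊆ Orb fA a) := by
    intro hsub
    apply hu1
    apply hf
    rw [map_one]
    apply Equiv.ext
    intro b
    show f u b = b
    by_cases hb : b ∈ Orb f a
    · obtain ⟨α, rfl⟩ := hsub hb
      show f u (f (α : E) a) = f (α : E) a
      rw [← Perm.mul_apply, ← map_mul, ← hucomm _ α.2, map_mul, Perm.mul_apply, hufix]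
    · exact hout b hb u
  -- all A-orbits have at most p points
  have hOAle : ∀ b : Fin n, Nat.card (Orb fA b) ≤ p := by
    intro b
    by_cases hb : b ∈ Orb f a
    · have hsub : Orb fA b ⊆ Orb f a := by
        rintro _ ⟨α, rfl⟩
        exact Orb_invariant f a (α : E) hb
      have hne : Orb fA b ≠ Orb f a := by
        intro heq
        apply ufix_contra
        have ha' : a ∈ Orb fA b := heq ▸ self_mem_Orb f a
        have h1 : Orb fA a = Orb fA b := Orb_eq_of_mem ha'
        rw [heq] at h1
        exact h1.symm.subset
      have hlt : Nat.card (Orb fA b) < p ^ 2 := by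
        rw [← hcard, Nat.card_coe_set_eq, Nat.card_coe_set_eq]
        exact Set.ncard_lt_ncard (ssubset_of_subset_of_ne hsub hne) (Set.toFinite _)
      have hdvd : Nat.card (Orb fA b) ∣ p ^ 5 := by
        refine dvd_trans (card_Orb_dvd fA b) ?_
        exact hE ▸ Subgroup.card_subgroup_dvd_card A
      obtain ⟨k, _, hk⟩ := (Nat.dvd_prime_pow hp).mp hdvd
      have hk1 : k ≤ 1 := by
        by_contra hcon
        push_neg at hcon
        have : p ^ 2 ≤ p ^ k := Nat.pow_le_pow_right hp.pos hcon
        omega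
      calc Nat.card (Orb fA b) = p ^ k := hk
      _ ≤ p ^ 1 := Nat.pow_le_pow_right hp.pos hk1
      _ = p := pow_one p
    · have hsingle : Orb fA b = {b} := by
        apply subset_antisymm
        · rintro _ ⟨α, rfl⟩
          show f ((α : E)) b ∈ ({b} : Set (Fin n))
          rw [hout b hb (α : E)]
          exact rfl
        · intro x hx
          rw [Set.mem_singleton_iff] at hx
          rw [hx]
          exact self_mem_Orb fA b
      rw [hsingle, Nat.card_coe_set_eq, Set.ncard_singleton]
      exact hp.pos
  -- the subgroup J = A ⊔ H
  set J : Subgroup E := A ⊔ H with hJdef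
  have hHleJ : H ≤ J := le_sup_right
  have hνJ : ν ∈ J := (le_sup_left : A ≤ J) hνA
  have hJneH : H ≠ J := fun h => hνH (h ▸ hνJ)
  have hset : (J : Set E) = ↑A * ↑H := by rw [hJdef, Subgroup.normal_mul]
  have hJnetop : J ≠ ⊤ := by
    intro htop
    apply ufix_contra
    intro b hb
    obtain ⟨e, rfl⟩ := hb
    have he : e ∈ (J : Set E) := by rw [htop]; trivial
    rw [hset, Set.mem_mul] at he
    obtain ⟨α, hα, h', hh', rfl⟩ := he
    show f (α * h') a ∈ Orb fA a
    have hfix : f h' a = a := mem_Stab_iff.mp hh'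
    rw [map_mul, Perm.mul_apply, hfix]
    exact ⟨⟨α, hα⟩, rfl⟩
  -- |J| = p⁴
  have hcardJdvd : Nat.card J ∣ p ^ 5 := hE ▸ Subgroup.card_subgroup_dvd_card J
  obtain ⟨k, hk5, hkJ⟩ := (Nat.dvd_prime_pow hp).mp hcardJdvd
  have hHdvdJ : Nat.card H ∣ Nat.card J := Subgroup.card_dvd_of_le hHleJ
  have hk3 : 3 ≤ k := by
    rw [hcardH, hkJ] at hHdvdJ
    exact (Nat.pow_dvd_pow_iff_le_right hp.one_lt).mp hHdvdJ
  have hkne3 : k ≠ 3 := by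
    intro hkk
    apply hJneH
    exact Subgroup.eq_of_le_of_card_ge hHleJ (by rw [hcardH, hkJ, hkk])
  have hkne5 : k ≠ 5 := by
    intro hkk
    apply hJnetop
    apply Subgroup.eq_top_of_card_eq
    rw [hkJ, hkk, hE]
  have hk4 : k = 4 := by omega
  have hcardJ : Nat.card J = p ^ 4 := by rw [hkJ, hk4]
  have hindexJ : J.index = p := by
    have h1 := Subgroup.card_mul_index J
    rw [hcardJ, hE] at h1
    have h2 : p ^ 4 * J.index = p ^ 4 * p := by rw [h1]; ring
    exact Nat.eq_of_mul_eq_mul_left (by positivity) h2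
  have hcardQ : Nat.card (E ⧸ J) = p := by
    rw [← Subgroup.index_eq_card, hindexJ]
  -- the kernel K of the action on E ⧸ J
  set ρJ : E →* Perm (E ⧸ J) := MulAction.toPermHom E (E ⧸ J) with hρJdef
  set K : Subgroup E := ρJ.ker with hKdef
  have hsmul : ∀ (g e : E), ρJ g ((e : E) : E ⧸ J) = ((g * e : E) : E ⧸ J) := by
    intro g e
    show g • ((e : E) : E ⧸ J) = ((g * e : E) : E ⧸ J)
    rw [MulAction.Quotient.smul_mk]
    rfl
  have hKrange : Nat.card ρJ.range ∣ p := card_range_dvd_p (M := 5) hp hG (le_of_eq hcardQ) ρJ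
  have hKmul : Nat.card K * Nat.card ρJ.range = p ^ 5 := by
    rw [← hE]; exact card_ker_mul_card_range ρJ
  have hKleJ : K ≤ J := by
    intro g hg
    have h1 : ρJ g = 1 := hg
    have h2 := hsmul g 1
    rw [h1] at h2
    simp only [Perm.one_apply, mul_one] at h2
    have h3 : (1 : E)⁻¹ * g ∈ J := QuotientGroup.eq.mp h2
    simpa using h3
  have hcardKle : Nat.card K ≤ p ^ 4 := hcardJ ▸ Subgroup.card_le_of_le hKleJ
  have hcardK : Nat.card K = p ^ 4 := by
    rcases (Nat.dvd_prime hp).mp hKrange with h1 | h1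
    · exfalso
      rw [h1, mul_one] at hKmul
      have : p ^ 4 < p ^ 5 := Nat.pow_lt_pow_right hp.one_lt (by omega)
      omega
    · rw [h1] at hKmul
      have h2 : Nat.card K * p = p ^ 4 * p := by rw [hKmul]; ring
      exact Nat.eq_of_mul_eq_mul_right hp.pos h2
  -- conjugates of elements of K lie in J
  have hKconj : ∀ g ∈ K, ∀ e : E, e⁻¹ * g * e ∈ J := by
    intro g hg e
    have h1 : ρJ g = 1 := hg
    have h2 := hsmul g e
    rw [h1] at h2
    simp only [Perm.one_apply] at h2
    have h3 : (e : E)⁻¹ * (g * e) ∈ J := QuotientGroup.eq.mp h2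
    have h4 : e⁻¹ * g * e = e⁻¹ * (g * e) := by group
    rw [h4]
    exact h3
  -- K moves points within their A-orbits
  have hKclass : ∀ g ∈ K, ∀ b : Fin n, f g b ∈ Orb fA b := by
    intro g hg b
    by_cases hb : b ∈ Orb f a
    · obtain ⟨e, rfl⟩ := hb
      have h1 : e⁻¹ * g * e ∈ (↑A * ↑H : Set E) := by
        rw [← hset]
        exact hKconj g hg e
      rw [Set.mem_mul] at h1
      obtain ⟨α, hα, h', hh', heq⟩ := h1
      have hg_eq : g * e = e * (α * h') := by
        rw [heq]; group
      show f g (f e a) ∈ Orb fA (f e a)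
      have h3 : f g (f e a) = f (e * α) a := by
        rw [← Perm.mul_apply, ← map_mul, hg_eq,
          show e * (α * h') = (e * α) * h' by group, map_mul, Perm.mul_apply,
          mem_Stab_iff.mp hh']
      have h4 : f (e * α) a = f (e * α * e⁻¹) (f e a) := by
        rw [← Perm.mul_apply, ← map_mul]
        congr 1
        group
      rw [h3, h4]
      exact ⟨⟨e * α * e⁻¹, hAnorm.conj_mem α hα e⟩, rfl⟩
    · rw [hout b hb g]
      exact self_mem_Orb _ _
  -- K is abelian
  have hKab : ∀ g ∈ K, ∀ g' ∈ K, g * g' = g' * g := by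
    intro g hg g' hg'
    have hcomm1 : comm' g g' = 1 := by
      apply hf
      rw [map_one]
      apply Equiv.ext
      intro b
      show f (comm' g g') b = b
      set fK : K →* Perm (Fin n) := f.comp K.subtype with hfKdef
      have hinv : ∀ κ : E, κ ∈ K → ∀ x ∈ Orb fA b, f κ x ∈ Orb fA b := by
        intro κ hκ x hx
        have h1 : f κ x ∈ Orb fA x := hKclass _ hκ x
        rwa [Orb_eq_of_mem hx] at h1
      have hinv' : ∀ κ : K, ∀ x ∈ Orb fA b, fK κ x ∈ Orb fA b := fun κ x hx =>
        hinv (κ : E) κ.2 x hx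
      have hKdvd : Nat.card K ∣ p ^ 5 := hE ▸ Subgroup.card_subgroup_dvd_card K
      have hρ := comm'_map_eq_one hp (restrictHom fK (Orb fA b) hinv')
        (card_range_dvd_p (M := 5) hp hKdvd (hOAle b) _) ⟨g, hg⟩ ⟨g', hg'⟩
      have h2 := congrArg (fun σ : Perm (Orb fA b) => (σ ⟨b, self_mem_Orb fA b⟩ : Fin n)) hρ
      exact h2
    exact (G4iso.comm'_one hcomm1).symm
  -- pick t outside K
  have hKnetop : K ≠ ⊤ := by
    intro h
    have h1 : Nat.card K = p ^ 5 := by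
      rw [h, ← hE]
      exact Nat.card_congr Subgroup.topEquiv.toEquiv
    rw [hcardK] at h1
    have : p ^ 4 < p ^ 5 := Nat.pow_lt_pow_right hp.one_lt (by omega)
    omega
  obtain ⟨t, ht⟩ : ∃ t : E, t ∉ K := by
    by_contra hcon
    push_neg at hcon
    exact hKnetop ((Subgroup.eq_top_iff' K).mpr hcon)
  -- index of K is p, so E = ⟨t⟩ K
  have hindexK : K.index = p := by
    have h1 := Subgroup.card_mul_index K
    rw [hcardK, hE] at h1
    have h2 : p ^ 4 * K.index = p ^ 4 * p := by rw [h1]; ring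
    exact Nat.eq_of_mul_eq_mul_left (by positivity) h2
  have hcardQK : Nat.card (E ⧸ K) = p := by rw [← Subgroup.index_eq_card, hindexK]
  have hdecomp : ∀ e : E, ∃ i : ℤ, ∃ k, k ∈ K ∧ e = t ^ i * k := by
    have htQ : ((t : E ⧸ K)) ≠ 1 := by
      rw [Ne, QuotientGroup.eq_one_iff]
      exact ht
    have htop : Subgroup.zpowers ((t : E ⧸ K)) = ⊤ := by
      apply Subgroup.eq_top_of_card_eq
      rw [Nat.card_zpowers, hcardQK]
      have hdvd : orderOf ((t : E ⧸ K)) ∣ p := hcardQK ▸ orderOf_dvd_natCard _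
      rcases (Nat.dvd_prime hp).mp hdvd with h | h
      · exact absurd (orderOf_eq_one_iff.mp h) htQ
      · rw [h]
    intro e
    have hmem : (e : E ⧸ K) ∈ Subgroup.zpowers ((t : E ⧸ K)) := by
      rw [htop]; trivial
    obtain ⟨i, hi⟩ := hmem
    refine ⟨i, (t ^ i)⁻¹ * e, ?_, by group⟩
    have h2 : ((t ^ i : E) : E ⧸ K) = (e : E ⧸ K) := by
      rw [← hi]
      rfl
    exact QuotientGroup.eq.mp h2
  -- the homomorphism φ : K → E, κ ↦ [κ, t]
  have hcommK_mem : ∀ κ : E, κ ∈ K → comm' κ t ∈ K := by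
    intro κ hκ
    have h1 : κ⁻¹ ∈ K := K.inv_mem hκ
    have h2 : t⁻¹ * κ * t ∈ K := by
      have h3 := (MonoidHom.normal_ker ρJ).conj_mem κ hκ t⁻¹
      rwa [inv_inv] at h3
    have h4 : comm' κ t = κ⁻¹ * (t⁻¹ * κ * t) := by
      show κ⁻¹ * t⁻¹ * κ * t = _
      group
    rw [h4]
    exact K.mul_mem h1 h2
  have hφmul : ∀ κ κ' : K, comm' (((κ * κ' : K)) : E) t =
      comm' (κ : E) t * comm' (κ' : E) t := by
    intro κ κ'
    have hab : comm' ((κ : E) * (κ' : E)) t =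
        (κ' : E)⁻¹ * comm' (κ : E) t * (κ' : E) * comm' (κ' : E) t := by
      show ((κ : E) * (κ' : E))⁻¹ * t⁻¹ * ((κ : E) * (κ' : E)) * t =
        (κ' : E)⁻¹ * ((κ : E)⁻¹ * t⁻¹ * (κ : E) * t) * (κ' : E) *
          ((κ' : E)⁻¹ * t⁻¹ * (κ' : E) * t)
      group
    have hc : comm' (κ : E) t * (κ' : E) = (κ' : E) * comm' (κ : E) t :=
      hKab _ (hcommK_mem _ κ.2) _ κ'.2
    have hconj : (κ' : E)⁻¹ * comm' (κ : E) t * (κ' : E) = comm' (κ : E) t := by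
      rw [mul_assoc, hc]
      group
    show comm' ((κ : E) * (κ' : E)) t = _
    rw [hab, hconj]
  set φ : K →* E := MonoidHom.mk' (fun κ => comm' (κ : E) t) hφmul with hφdef
  set DE : Subgroup E := Subgroup.comap π (Subgroup.zpowers Conc.Zc) with hDEdef
  have hφD : ∀ κ : K, φ κ ∈ DE := by
    intro κ
    rw [hDEdef, Subgroup.mem_comap]
    show π (comm' (κ : E) t) ∈ Subgroup.zpowers Conc.Zc
    rw [G4iso.map_comm']
    exact Conc.comm'_mem_zpowers hp _ _
  have hcardDE : Nat.card DE ≤ p ^ 2 := by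
    set ρD : DE →* Conc p := π.comp DE.subtype with hρDdef
    have h1 := card_ker_mul_card_range ρD
    have h2 : Nat.card ρD.ker ≤ p := by
      have hinj : Injective (fun d : ρD.ker => (⟨((d : DE) : E), by
          rw [MonoidHom.mem_ker]
          exact MonoidHom.mem_ker.mp d.2⟩ : π.ker)) := by
        intro d d' h
        have h3 := congrArg (fun s : π.ker => (s : E)) h
        exact Subtype.ext (Subtype.ext h3)
      calc Nat.card ρD.ker ≤ Nat.card π.ker := Nat.card_le_card_of_injective _ hinj
      _ = p := hπk
    have h3 : Nat.card ρD.range ≤ p := by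
      have hle : ρD.range ≤ Subgroup.zpowers Conc.Zc := by
        rintro _ ⟨d, rfl⟩
        exact Subgroup.mem_comap.mp d.2
      calc Nat.card ρD.range ≤ Nat.card (Subgroup.zpowers Conc.Zc) :=
          Subgroup.card_le_of_le hle
      _ ≤ p := Conc.card_zpowers_Zc hp
    calc Nat.card DE = Nat.card ρD.ker * Nat.card ρD.range := h1.symm
    _ ≤ p * p := Nat.mul_le_mul h2 h3
    _ = p ^ 2 := by ring
  have hrangele : φ.range ≤ DE := by
    rintro _ ⟨κ, rfl⟩
    exact hφD κ
  have hcardrange : Nat.card φ.range ≤ p ^ 2 :=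
    le_trans (Subgroup.card_le_of_le hrangele) hcardDE
  have hkerφ : p ^ 2 ≤ Nat.card φ.ker := by
    have h1 := card_ker_mul_card_range φ
    rw [hcardK] at h1
    by_contra hcon
    push_neg at hcon
    have hrpos : 0 < Nat.card φ.range := Nat.card_pos
    have h2 : Nat.card φ.ker * Nat.card φ.range < p ^ 2 * p ^ 2 :=
      Nat.mul_lt_mul_of_lt_of_le hcon hcardrange (by positivity)
    rw [h1] at h2
    have : p ^ 2 * p ^ 2 = p ^ 4 := by ring
    omega
  -- elements of ker φ are central
  have hcentral : ∀ κ : φ.ker, ((κ : K) : E) ∈ Subgroup.center E := by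
    intro κ
    have hct : ((κ : K) : E) * t = t * ((κ : K) : E) := by
      have h1 : comm' ((κ : K) : E) t = 1 := κ.2
      exact (G4iso.comm'_one h1).symm
    rw [Subgroup.mem_center_iff]
    intro e
    obtain ⟨i, k, hkK, rfl⟩ := hdecomp e
    have hcti : ((κ : K) : E) * t ^ i = t ^ i * ((κ : K) : E) :=
      ((Commute.zpow_right (hct : Commute _ t) i).eq)
    have hck : ((κ : K) : E) * k = k * ((κ : K) : E) := hKab _ (κ : K).2 _ hkK
    calc (t ^ i * k) * ((κ : K) : E) = t ^ i * (k * ((κ : K) : E)) := by group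
    _ = t ^ i * (((κ : K) : E) * k) := by rw [← hck]
    _ = (t ^ i * ((κ : K) : E)) * k := by group
    _ = (((κ : K) : E) * t ^ i) * k := by rw [← hcti]
    _ = ((κ : K) : E) * (t ^ i * k) := by group
  have hinjfinal : Injective (fun κ : φ.ker =>
      (⟨((κ : K) : E), hcentral κ⟩ : Subgroup.center E)) := by
    intro κ κ' h
    have h1 := congrArg (fun s : Subgroup.center E => (s : E)) h
    exact Subtype.ext (Subtype.ext h1)
  calc p ^ 2 ≤ Nat.card φ.ker := hkerφ
  _ ≤ Nat.card (Subgroup.center E) := Nat.card_le_card_of_injective _ hinjfinal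

end CenterBig

open Equiv Function Subgroup

section UpperBound

variable {p : ℕ}

/-- Conjugating permutations by an equivalence, as a monoid hom. -/
def permCongrHom {α β : Type*} (e : α ≃ β) : Perm α →* Perm β where
  toFun σ := (e.symm.trans σ).trans e
  map_one' := by ext x; simp
  map_mul' σ τ := by ext x; simp [Perm.mul_apply]

lemma permCongrHom_injective {α β : Type*} (e : α ≃ β) : Injective (_root_.permCongrHom e) := by
  intro σ τ h
  ext x
  have h1 := congrArg (fun ρ : Perm β => e.symm (ρ (e x))) h
  simpa [_root_.permCongrHom] using h1

/-- The representation of `Conc p` on `(ZMod p × ZMod p)` (the Heisenberg part). -/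
def rep1 : Conc p →* Perm (ZMod p × ZMod p) :=
  MonoidHom.mk' (fun g =>
    { toFun := fun uv => (uv.1 + g.a, uv.2 + g.c - g.b * uv.1)
      invFun := fun uv => (uv.1 - g.a, uv.2 - g.c + g.b * (uv.1 - g.a))
      left_inv := by
        intro uv
        rw [Prod.ext_iff]
        constructor <;> simp <;> ring
      right_inv := by
        intro uv
        rw [Prod.ext_iff]
        constructor <;> simp <;> ring })
    (by
      intro g h
      ext uv
      · simp [Perm.mul_apply]; ring
      · simp [Perm.mul_apply]; ring)

/-- The translation representation of `Conc p` on `ZMod p` (the `W` part). -/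
def rep2 : Conc p →* Perm (ZMod p) :=
  MonoidHom.mk' (fun g =>
    { toFun := fun s => s + g.d
      invFun := fun s => s - g.d
      left_inv := by intro s; ring_nf
      right_inv := by intro s; ring_nf })
    (by
      intro g h
      ext s
      simp [Perm.mul_apply]
      ring)

/-- The faithful representation of `Conc p` on `p² + p` points. -/
def repSum : Conc p →* Perm ((ZMod p × ZMod p) ⊕ ZMod p) :=
  (Equiv.Perm.sumCongrHom _ _).comp (rep1.prod rep2)

lemma repSum_injective (hp : p.Prime) : Injective (repSum : Conc p →* _) := by
  haveI : NeZero p := ⟨hp.pos.ne'⟩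
  haveI : Fact (1 < p) := ⟨hp.one_lt⟩
  rw [injective_iff_map_eq_one]
  intro g hg
  have h1 : (rep1 g, rep2 g) = (1 : Perm (ZMod p × ZMod p) × Perm (ZMod p)) :=
    Equiv.Perm.sumCongrHom_injective (by simpa [repSum] using hg)
  have h2 : rep1 g = 1 := congrArg Prod.fst h1
  have h3 : rep2 g = 1 := congrArg Prod.snd h1
  have ha : g.a = 0 := by
    have := congrArg (fun σ : Perm (ZMod p × ZMod p) => (σ (0, 0)).1) h2
    simpa [rep1] using this
  have hc : g.c = 0 := by
    have := congrArg (fun σ : Perm (ZMod p × ZMod p) => (σ (0, 0)).2) h2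
    simpa [rep1] using this
  have hb : g.b = 0 := by
    have h4 := congrArg (fun σ : Perm (ZMod p × ZMod p) => (σ (1, 0)).2) h2
    simp [rep1, hc] at h4
    simpa using h4
  have hd : g.d = 0 := by
    have := congrArg (fun σ : Perm (ZMod p) => σ 0) h3
    simpa [rep2] using this
  ext <;> simp [ha, hb, hc, hd]

/-- `Conc p` embeds into `Sym(p² + p)`. -/
lemma conc_embeds (hp : p.Prime) :
    ∃ f : Conc p →* Perm (Fin (p ^ 2 + p)), Injective f := by
  haveI : NeZero p := ⟨hp.pos.ne'⟩
  have hcard : Fintype.card ((ZMod p × ZMod p) ⊕ ZMod p) = p ^ 2 + p := by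
    simp [ZMod.card p]
    ring
  set e : ((ZMod p × ZMod p) ⊕ ZMod p) ≃ Fin (p ^ 2 + p) :=
    Fintype.equivFinOfCardEq hcard
  exact ⟨(_root_.permCongrHom e).comp repSum,
    (permCongrHom_injective e).comp (repSum_injective hp)⟩

end UpperBound

/-! ### The main theorem -/

theorem G4_not_distinguished_quotient' (p : ℕ) (hp : p.Prime) (hodd : Odd p)
    (E : Type*) [Group E] [Fintype E] (hE : Fintype.card E = p ^ 5)
    (N : Subgroup E) [N.Normal] (hNc : N ≤ Subgroup.center E) (hNcard : Nat.card N = p)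
    (hquot : Nonempty ((E ⧸ N) ≃* G4 p)) :
    minDeg (G4 p) = p ^ 2 + p ∧ ¬ minDeg E < minDeg (G4 p) := by
  haveI : NeZero p := ⟨hp.pos.ne'⟩
  haveI : Finite (G4 p) := G4iso.finite_G4 hp
  have hθbij := G4iso.θ_bijective (p := p) hp
  -- membership: upper bound
  have hmem : (p ^ 2 + p) ∈ {n | ∃ f : G4 p →* Perm (Fin n), Injective f} := by
    obtain ⟨f0, hf0⟩ := conc_embeds hp
    exact ⟨f0.comp G4iso.θ, hf0.comp hθbij.injective⟩
  -- lower bound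
  have hlow : ∀ m ∈ {n | ∃ f : G4 p →* Perm (Fin n), Injective f}, p ^ 2 + p ≤ m := by
    intro m hm
    by_contra hcon
    push_neg at hcon
    obtain ⟨f, hfinj⟩ := hm
    have hψinj : Injective ((G4iso.θiso hp).symm.toMonoidHom : Conc p →* G4 p) :=
      (G4iso.θiso hp).symm.injective
    have hζ : comm' (Conc.X : Conc p) Conc.Y ≠ 1 := by
      rw [Conc.comm'_X_Y]
      exact Conc.Zc_ne_one hp
    exact key (M := 4) hp (by rw [Conc.card_conc hp])
      (f.comp (G4iso.θiso hp).symm.toMonoidHom) (hfinj.comp hψinj) hcon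
      Conc.X Conc.Y hζ (Conc.card_center_ge hp)
  have hminG4 : minDeg (G4 p) = p ^ 2 + p :=
    le_antisymm (Nat.sInf_le hmem) (le_csInf ⟨_, hmem⟩ hlow)
  refine ⟨hminG4, ?_⟩
  intro hlt
  rw [hminG4] at hlt
  -- the set for E is nonempty (Cayley)
  have hSE : {n | ∃ f : E →* Perm (Fin n), Injective f}.Nonempty := by
    refine ⟨Fintype.card E, ?_⟩
    have hcinj : Injective (MulAction.toPermHom E E) := by
      intro g h hh
      exact MulAction.toPerm_injective hh
    exact ⟨(_root_.permCongrHom (Fintype.equivFin E)).comp (MulAction.toPermHom E E),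
      (permCongrHom_injective _).comp hcinj⟩
  have hminE_mem : minDeg E ∈ {n | ∃ f : E →* Perm (Fin n), Injective f} :=
    Nat.sInf_mem hSE
  obtain ⟨f, hfinj⟩ := hminE_mem
  -- the projection π : E → Conc p
  obtain ⟨eqv⟩ := hquot
  set π : E →* Conc p :=
    G4iso.θ.comp ((eqv.toMonoidHom).comp (QuotientGroup.mk' N)) with hπdef
  have hπs : Surjective π := by
    rw [hπdef]
    intro c
    obtain ⟨g, hg⟩ := G4iso.θ_surjective hp c
    obtain ⟨q, hq⟩ := eqv.surjective g
    obtain ⟨e, he⟩ := QuotientGroup.mk'_surjective N q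
    exact ⟨e, by simp [MonoidHom.comp_apply, he, hq, hg]⟩
  have hπker : π.ker = N := by
    ext g
    rw [MonoidHom.mem_ker, hπdef]
    simp only [MonoidHom.comp_apply, MulEquiv.coe_toMonoidHom]
    constructor
    · intro h
      have h1 : eqv ((QuotientGroup.mk' N) g) = 1 :=
        hθbij.injective (by rw [h, map_one])
      have h2 : (QuotientGroup.mk' N) g = 1 := eqv.injective (by rw [h1, map_one])
      exact (QuotientGroup.eq_one_iff g).mp h2
    · intro h
      have h2 : (QuotientGroup.mk' N) g = 1 := (QuotientGroup.eq_one_iff g).mpr h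
      rw [h2, map_one, map_one]
  have hπkcard : Nat.card π.ker = p := by rw [hπker]; exact hNcard
  have hπkc : (π.ker : Set E) ⊆ Subgroup.center E := by
    rw [hπker]
    exact fun x hx => hNc hx
  have hE5 : Nat.card E = p ^ 5 := by rw [Nat.card_eq_fintype_card, hE]
  obtain ⟨xt, hxt⟩ := hπs Conc.X
  obtain ⟨yt, hyt⟩ := hπs Conc.Y
  have hζ : comm' xt yt ≠ 1 := by
    intro h
    apply Conc.Zc_ne_one hp
    have : π (comm' xt yt) = Conc.Zc := by
      rw [G4iso.map_comm', hxt, hyt, Conc.comm'_X_Y]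
    rw [← this, h, map_one]
  exact key (M := 5) hp (hE5 ▸ dvd_rfl) f hfinj hlt xt yt hζ
    (centerBig hp hE5 π hπs hπkcard hπkc f hfinj hlt)

/-- `μ(G₄) = p² + p`, and no central extension `E` of `G₄` of order `p⁵` (with central
`N` of order `p` and `E/N ≅ G₄`) satisfies `μ(E) < μ(G₄)`: `G₄` is not a distinguished
quotient of an exceptional group of order `p⁵`. -/
theorem G4_not_distinguished_quotient (p : ℕ) (hp : p.Prime) (hodd : Odd p)
    (E : Type*) [Group E] [Fintype E] (hE : Fintype.card E = p ^ 5)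
    (N : Subgroup E) [N.Normal] (hNc : N ≤ Subgroup.center E) (hNcard : Nat.card N = p)
    (hquot : Nonempty ((E ⧸ N) ≃* G4 p)) :
    minDeg (G4 p) = p ^ 2 + p ∧ ¬ minDeg E < minDeg (G4 p) :=
  G4_not_distinguished_quotient' p hp hodd E hE N hNc hNcard hquot
end

section
/- Every finite p-group of order p⁵ contains an abelian normal subgroup of order p³. -/
open Subgroup MulAction Pointwise

namespace BurnsideP5Aux

universe u

variable {p : ℕ} {G : Type*} [Group G]

lemma normal_of_le_center {H : Subgroup G} (h : H ≤ Subgroup.center G) : H.Normal := by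
  constructor
  intro n hn g
  have hc : g * n = n * g := Subgroup.mem_center_iff.mp (h hn) g
  rw [hc, mul_inv_cancel_right]
  exact hn

lemma centralizer_normal {A : Subgroup G} (hA : A.Normal) :
    (Subgroup.centralizer (A : Set G)).Normal := by
  constructor
  intro n hn g
  rw [Subgroup.mem_centralizer_iff] at hn ⊢
  intro h hh
  have h1 : g⁻¹ * h * g ∈ A := by simpa using hA.conj_mem h hh g⁻¹
  have h2 := hn _ h1
  have e1 : h * (g * n * g⁻¹) = g * (g⁻¹ * h * g * n) * g⁻¹ := by group
  rw [e1, h2]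
  group

/-- In a finite `p`-group, every nontrivial normal subgroup contains a central element of
order `p`. -/
lemma exists_central_order_p [Finite G] (hp : p.Prime) (hG : IsPGroup p G)
    (N : Subgroup G) (hN : N.Normal) (hNt : N ≠ ⊥) :
    ∃ x : G, x ∈ N ⊓ Subgroup.center G ∧ orderOf x = p := by
  haveI : Fact p.Prime := ⟨hp⟩
  have hNtriv : Nontrivial N := N.nontrivial_iff_ne_bot.mpr hNt
  obtain ⟨n, hn0, hcard⟩ := (hG.to_subgroup N).nontrivial_iff_card.mp hNtriv
  have hdvd : p ∣ Nat.card N := hcard ▸ dvd_pow_self p hn0.ne'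
  have h1fix : (1 : N) ∈ MulAction.fixedPoints (ConjAct G) N := fun g => smul_one g
  obtain ⟨b, hbfix, hbne⟩ :=
    (hG.of_equiv ConjAct.toConjAct).exists_fixed_point_of_prime_dvd_card_of_fixed_point
      (α := N) hdvd h1fix
  have hbc : (b : G) ∈ Subgroup.center G := by
    rw [Subgroup.mem_center_iff]
    intro g
    have h := congrArg Subtype.val (hbfix (ConjAct.toConjAct g))
    rw [ConjAct.Subgroup.val_conj_smul, ConjAct.smul_def, ConjAct.ofConjAct_toConjAct] at h
    calc g * (b : G) = g * (b : G) * g⁻¹ * g := by group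
    _ = (b : G) * g := by rw [h]
  have hb1 : (b : G) ≠ 1 := fun h => hbne (Subtype.ext h.symm)
  set K := N ⊓ Subgroup.center G with hK
  have hKtriv : Nontrivial K :=
    ⟨⟨⟨(b : G), ⟨b.2, hbc⟩⟩, 1, fun h => hb1 (congrArg Subtype.val h)⟩⟩
  obtain ⟨m, hm0, hKcard⟩ := (hG.to_subgroup K).nontrivial_iff_card.mp hKtriv
  have hKdvd : p ∣ Nat.card K := hKcard ▸ dvd_pow_self p hm0.ne'
  obtain ⟨y, hy⟩ := exists_prime_orderOf_dvd_card' (G := K) p hKdvd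
  exact ⟨(y : G), y.2, (Subgroup.orderOf_coe y).trans hy⟩

/-- In a finite `p`-group, any normal subgroup whose order is divisible by `p ^ k`
contains a subgroup of order `p ^ k` that is normal in the whole group. -/
lemma exists_normal_le_card (hp : p.Prime) (k : ℕ) :
    ∀ (Γ : Type u) [Group Γ] [Finite Γ], IsPGroup p Γ → ∀ N : Subgroup Γ, N.Normal →
      p ^ k ∣ Nat.card N → ∃ H : Subgroup Γ, H ≤ N ∧ H.Normal ∧ Nat.card H = p ^ k := by
  induction k with
  | zero =>
    intro Γ _ _ _ N _ _
    exact ⟨⊥, bot_le, inferInstance, by simp⟩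
  | succ k ih =>
    intro Γ _ _ hG N hN hdvd
    have hNbot : N ≠ ⊥ := by
      rintro rfl
      rw [Subgroup.card_bot] at hdvd
      have h1 := Nat.le_of_dvd one_pos hdvd
      have h2 : 1 < p ^ (k + 1) := Nat.one_lt_pow (Nat.succ_ne_zero k) hp.one_lt
      omega
    obtain ⟨x, hx, hxp⟩ := exists_central_order_p hp hG N hN hNbot
    set Z1 : Subgroup Γ := Subgroup.zpowers x with hZ1
    have hZ1le : Z1 ≤ N := (Subgroup.zpowers_le).mpr hx.1
    haveI hZ1n : Z1.Normal := normal_of_le_center ((Subgroup.zpowers_le).mpr hx.2)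
    have hZ1card : Nat.card Z1 = p := (Nat.card_zpowers x).trans hxp
    set f := QuotientGroup.mk' Z1 with hf
    have hfsurj : Function.Surjective f := QuotientGroup.mk'_surjective Z1
    have hQ : IsPGroup p (Γ ⧸ Z1) := hG.to_quotient Z1
    set N' := N.map f with hN'
    haveI hN'n : N'.Normal := hN.map f hfsurj
    have hcomapN : N'.comap f = N := by
      rw [hN', Subgroup.comap_map_eq, QuotientGroup.ker_mk']
      exact sup_eq_left.mpr hZ1le
    have hGQ : Nat.card Γ = Nat.card (Γ ⧸ Z1) * p := by
      rw [Subgroup.card_eq_card_quotient_mul_card_subgroup Z1, hZ1card]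
    have hiN : N.index = N'.index := by
      conv_lhs => rw [← hcomapN]
      exact Subgroup.index_comap_of_surjective _ hfsurj
    have hipos : 0 < N.index := Nat.pos_of_ne_zero Subgroup.index_ne_zero_of_finite
    have hNcard : Nat.card N = Nat.card N' * p := by
      have h1 := Subgroup.card_mul_index N
      have h2 := Subgroup.card_mul_index N'
      have key : Nat.card N * N.index = Nat.card N' * p * N.index := by
        rw [h1, hGQ, ← h2, hiN]; ring
      exact Nat.eq_of_mul_eq_mul_right hipos key
    have hdvd' : p ^ k ∣ Nat.card N' := by
      have : p ^ k * p ∣ Nat.card N' * p := by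
        rw [← pow_succ, ← hNcard]; exact hdvd
      exact (Nat.mul_dvd_mul_iff_right hp.pos).mp this
    obtain ⟨H', hH'le, hH'n, hH'card⟩ := ih (Γ ⧸ Z1) hQ N' hN'n hdvd'
    refine ⟨H'.comap f, ?_, hH'n.comap f, ?_⟩
    · calc H'.comap f ≤ N'.comap f := Subgroup.comap_mono hH'le
      _ = N := hcomapN
    · have hi : (H'.comap f).index = H'.index :=
        Subgroup.index_comap_of_surjective _ hfsurj
      have hipos' : 0 < (H'.comap f).index :=
        Nat.pos_of_ne_zero Subgroup.index_ne_zero_of_finite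
      have h1 := Subgroup.card_mul_index (H'.comap f)
      have h2 := Subgroup.card_mul_index H'
      have key : Nat.card (H'.comap f) * (H'.comap f).index
          = p ^ (k + 1) * (H'.comap f).index := by
        rw [h1, hGQ, ← h2, hH'card, hi, pow_succ]; ring
      exact Nat.eq_of_mul_eq_mul_right hipos' key

/-- Enlargement: if an abelian normal subgroup is strictly contained in its centralizer,
there is a strictly bigger abelian normal subgroup. -/
lemma enlarge [Finite G] (hp : p.Prime) (hG : IsPGroup p G) (A : Subgroup G) (hA : A.Normal)
    (hab : ∀ a ∈ A, ∀ b ∈ A, a * b = b * a)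
    (hne : Subgroup.centralizer (A : Set G) ≠ A) :
    ∃ B : Subgroup G, B.Normal ∧ (∀ a ∈ B, ∀ b ∈ B, a * b = b * a) ∧
      Nat.card A < Nat.card B := by
  set C := Subgroup.centralizer (A : Set G) with hC
  haveI hCn : C.Normal := centralizer_normal hA
  have hAleC : A ≤ C := fun a ha => Subgroup.mem_centralizer_iff.mpr fun h hh => hab h hh a ha
  set f := QuotientGroup.mk' A with hf
  have hfsurj : Function.Surjective f := QuotientGroup.mk'_surjective A
  have hkerf : f.ker = A := QuotientGroup.ker_mk' A
  have hQ : IsPGroup p (G ⧸ A) := hG.to_quotient A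
  set C' := C.map f with hC'
  haveI hC'n : C'.Normal := hCn.map f hfsurj
  -- C' is nontrivial
  obtain ⟨c₀, hc₀C, hc₀A⟩ : ∃ c, c ∈ C ∧ c ∉ A := by
    by_contra h
    push_neg at h
    exact hne (le_antisymm h hAleC)
  have hC'bot : C' ≠ ⊥ := by
    intro h
    have : f c₀ ∈ C' := Subgroup.mem_map_of_mem f hc₀C
    rw [h, Subgroup.mem_bot] at this
    exact hc₀A (hkerf ▸ this)
  obtain ⟨xb, hxb, hxbp⟩ := exists_central_order_p hp hQ C' hC'n hC'bot
  obtain ⟨c, hcC, hcx⟩ := Subgroup.mem_map.mp hxb.1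
  have hxb1 : xb ≠ 1 := by
    intro h
    rw [h, orderOf_one] at hxbp
    exact hp.ne_one hxbp.symm
  set B := (Subgroup.zpowers xb).comap f with hB
  haveI hzn : (Subgroup.zpowers xb).Normal :=
    normal_of_le_center ((Subgroup.zpowers_le).mpr hxb.2)
  have hBn : B.Normal := hzn.comap f
  have hAB : A ≤ B := by
    intro a ha
    rw [hB, Subgroup.mem_comap]
    have : f a = 1 := by rwa [← MonoidHom.mem_ker, hkerf]
    rw [this]
    exact one_mem _
  have hcB : c ∈ B := by
    rw [hB, Subgroup.mem_comap, hcx]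
    exact Subgroup.mem_zpowers xb
  have hcA : c ∉ A := by
    intro h
    have : f c = 1 := by rwa [← MonoidHom.mem_ker, hkerf]
    rw [hcx] at this
    exact hxb1 this
  -- B is abelian
  have hcab : ∀ a ∈ A, Commute c a := fun a ha => ((hcC a ha) : a * c = c * a).symm
  have habel : ∀ b₁ ∈ B, ∀ b₂ ∈ B, b₁ * b₂ = b₂ * b₁ := by
    intro b₁ hb₁ b₂ hb₂
    rw [hB, Subgroup.mem_comap] at hb₁ hb₂
    obtain ⟨k₁, hk₁⟩ := Subgroup.mem_zpowers_iff.mp hb₁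
    obtain ⟨k₂, hk₂⟩ := Subgroup.mem_zpowers_iff.mp hb₂
    have ha₁ : (c ^ k₁)⁻¹ * b₁ ∈ A := by
      rw [← hkerf, MonoidHom.mem_ker, map_mul, map_inv, map_zpow, hcx, hk₁, inv_mul_cancel]
    have ha₂ : (c ^ k₂)⁻¹ * b₂ ∈ A := by
      rw [← hkerf, MonoidHom.mem_ker, map_mul, map_inv, map_zpow, hcx, hk₂, inv_mul_cancel]
    set a₁ := (c ^ k₁)⁻¹ * b₁ with ha₁def
    set a₂ := (c ^ k₂)⁻¹ * b₂ with ha₂def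
    have hb₁eq : b₁ = c ^ k₁ * a₁ := by rw [ha₁def]; group
    have hb₂eq : b₂ = c ^ k₂ * a₂ := by rw [ha₂def]; group
    have comm : Commute (c ^ k₁ * a₁) (c ^ k₂ * a₂) := by
      have hcc : Commute (c ^ k₁) (c ^ k₂) := (Commute.refl c).zpow_zpow k₁ k₂
      have h12 : Commute (c ^ k₁) a₂ := (hcab a₂ ha₂).zpow_left k₁
      have h21 : Commute a₁ (c ^ k₂) := ((hcab a₁ ha₁).zpow_left k₂).symm
      have haa : Commute a₁ a₂ := hab a₁ ha₁ a₂ ha₂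
      exact (hcc.mul_right h12).mul_left (h21.mul_right haa)
    rw [hb₁eq, hb₂eq]
    exact comm.eq
  refine ⟨B, hBn, habel, ?_⟩
  by_contra hlt
  push_neg at hlt
  exact hcA (Subgroup.eq_of_le_of_card_ge hAB hlt ▸ hcB)

/-- There exists an abelian normal subgroup equal to its own centralizer. -/
lemma exists_self_centralizing [Finite G] (hp : p.Prime) (hG : IsPGroup p G) :
    ∃ A : Subgroup G, A.Normal ∧ (∀ a ∈ A, ∀ b ∈ A, a * b = b * a) ∧
      Subgroup.centralizer (A : Set G) = A := by
  by_contra h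
  push_neg at h
  have grow : ∀ n : ℕ, ∃ A : Subgroup G, A.Normal ∧
      (∀ a ∈ A, ∀ b ∈ A, a * b = b * a) ∧ n ≤ Nat.card A := by
    intro n
    induction n with
    | zero => exact ⟨⊥, inferInstance, by simp, Nat.zero_le _⟩
    | succ n ihn =>
      obtain ⟨A, hAn, hAab, hAcard⟩ := ihn
      obtain ⟨B, hBn, hBab, hBcard⟩ := enlarge hp hG A hAn hAab (h A hAn hAab)
      exact ⟨B, hBn, hBab, by omega⟩
  obtain ⟨A, _, _, hAcard⟩ := grow (Nat.card G + 1)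
  have : Nat.card A ≤ Nat.card G := by
    rw [← Subgroup.card_top (G := G)]
    exact Subgroup.card_le_of_le le_top
  omega

end BurnsideP5Aux

open BurnsideP5Aux Subgroup MulAction in
/-- Burnside: every group of order `p⁵` contains an abelian normal subgroup of order `p³`. -/
theorem abelian_normal_subgroup_of_card_p5 (p : ℕ) (hp : p.Prime)
    (G : Type*) [Group G] [Fintype G] (hG : Fintype.card G = p ^ 5) :
    ∃ H : Subgroup G, H.Normal ∧ Nat.card H = p ^ 3 ∧
      ∀ a ∈ H, ∀ b ∈ H, a * b = b * a := by
  haveI : Fact p.Prime := ⟨hp⟩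
  have hcardG : Nat.card G = p ^ 5 := by rw [Nat.card_eq_fintype_card, hG]
  have hGp : IsPGroup p G := IsPGroup.of_card hcardG
  haveI : Nontrivial G := Finite.one_lt_card_iff_nontrivial.mp
    (by rw [hcardG]; exact Nat.one_lt_pow (by norm_num) hp.one_lt)
  obtain ⟨A, hAn, hAab, hAc⟩ := exists_self_centralizing hp hGp
  have hAdvd : Nat.card A ∣ p ^ 5 := hcardG ▸ Subgroup.card_subgroup_dvd_card A
  obtain ⟨k, hk5, hAcard⟩ := (Nat.dvd_prime_pow hp).mp hAdvd
  -- center is contained in A and is nontrivial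
  have hZle : Subgroup.center G ≤ A := hAc ▸ Subgroup.center_le_centralizer (A : Set G)
  haveI hZnt : Nontrivial (Subgroup.center G) := hGp.center_nontrivial
  have hZcard : 1 < Nat.card (Subgroup.center G) := Finite.one_lt_card
  -- rule out small cases
  rcases le_or_gt 3 k with h3 | h3
  · -- use the normal-chain lemma inside A
    obtain ⟨H, hHle, hHn, hHcard⟩ := exists_normal_le_card hp 3 G hGp A hAn
      (hAcard ▸ pow_dvd_pow p h3)
    exact ⟨H, hHn, hHcard, fun a ha b hb => hAab a (hHle ha) b (hHle hb)⟩
  · exfalso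
    -- k ≤ 2
    have hZA : Nat.card (Subgroup.center G) ∣ Nat.card A := Subgroup.card_dvd_of_le hZle
    have hAne_top : Nat.card A ≠ Nat.card G := by
      rw [hAcard, hcardG]
      intro h
      have := Nat.pow_right_injective hp.two_le h
      omega
    -- if A = center G then centralizer A = ⊤ = A, so card A = card G, contradiction
    have hAnotcenter : A ≠ Subgroup.center G := by
      intro h
      have htop : Subgroup.centralizer (A : Set G) = ⊤ := by
        rw [h]
        exact eq_top_iff.mpr fun g _ => Subgroup.mem_centralizer_iff.mpr
          fun z hz => (Subgroup.mem_center_iff.mp hz g).symm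
      rw [hAc] at htop
      rw [htop] at hAne_top
      exact hAne_top Subgroup.card_top
    -- hence center < A, so k = 2 and card (center) = p, card A = p^2
    have hZltA : Subgroup.center G < A := lt_of_le_of_ne hZle fun h => hAnotcenter h.symm
    have hcardZ_lt : Nat.card (Subgroup.center G) < Nat.card A := by
      by_contra hh
      push_neg at hh
      exact hAnotcenter (Subgroup.eq_of_le_of_card_ge hZle hh).symm
    obtain ⟨j, hjk, hZj⟩ := (Nat.dvd_prime_pow hp).mp (hAcard ▸ hZA)
    have hj1 : 1 ≤ j := by
      by_contra hj
      push_neg at hj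
      interval_cases j
      rw [pow_zero] at hZj
      omega
    have hjlt : j < k := by
      have hh := hcardZ_lt
      rw [hZj, hAcard] at hh
      exact (Nat.pow_lt_pow_iff_right hp.one_lt).mp hh
    have hk2 : k = 2 := by omega
    subst hk2
    have hj1' : j = 1 := by omega
    subst hj1'
    have hZp : Nat.card (Subgroup.center G) = p := by rw [hZj, pow_one]
    -- pick a ∈ A \ center
    obtain ⟨a, haA, haZ⟩ := SetLike.exists_of_lt hZltA
    -- A = center ⊔ zpowers a
    set B₀ := Subgroup.center G ⊔ Subgroup.zpowers a with hB₀
    have hB₀le : B₀ ≤ A := sup_le hZle ((Subgroup.zpowers_le).mpr haA)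
    have hB₀eq : B₀ = A := by
      have hZleB : Subgroup.center G ≤ B₀ := le_sup_left
      have haB : a ∈ B₀ := Subgroup.mem_sup_right (Subgroup.mem_zpowers a)
      have hlt : Subgroup.center G < B₀ := lt_of_le_of_ne hZleB (fun h => haZ (h ▸ haB))
      have hcardlt : Nat.card (Subgroup.center G) < Nat.card B₀ := by
        by_contra hh
        push_neg at hh
        exact (ne_of_lt hlt) (Subgroup.eq_of_le_of_card_ge hZleB hh)
      have hdvd : Nat.card B₀ ∣ Nat.card A := Subgroup.card_dvd_of_le hB₀le
      rw [hAcard] at hdvd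
      obtain ⟨i, hi2, hBj⟩ := (Nat.dvd_prime_pow hp).mp hdvd
      have hp2 := hp.two_le
      have hi2' : i = 2 := by
        have hlt' := hcardlt
        rw [hZp, hBj] at hlt'
        interval_cases i
        · rw [pow_zero] at hlt'; omega
        · rw [pow_one] at hlt'; omega
        · rfl
      subst hi2'
      exact Subgroup.eq_of_le_of_card_ge hB₀le (by rw [hAcard, hBj])
    -- centralizer {a} ≤ A
    have hcent_le : Subgroup.centralizer {a} ≤ A := by
      rw [← hAc]
      intro g hg
      have hga : a * g = g * a := Subgroup.mem_centralizer_iff.mp hg a rfl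
      rw [Subgroup.mem_centralizer_iff]
      intro h hh
      rw [← hB₀eq] at hh
      have hh' : h ∈ (Subgroup.center G : Set G) * (Subgroup.zpowers a : Set G) := by
        rw [← Subgroup.normal_mul]
        exact hh
      obtain ⟨z, hz, y, hy, rfl⟩ := hh'
      obtain ⟨m, hm⟩ := Subgroup.mem_zpowers_iff.mp hy
      have hgz : Commute g z := (Subgroup.mem_center_iff.mp hz g)
      have hgy : Commute g y := by
        rw [← hm]
        exact (Commute.zpow_right ((hga.symm : g * a = a * g)) m)
      exact ((hgz.mul_right hgy).symm : (z * y) * g = g * (z * y))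
    -- orbit-stabilizer contradiction
    set S := MulAction.stabilizer (ConjAct G) a with hS
    have hScard : Nat.card (Subgroup.centralizer {a}) = Nat.card S := by
      rw [Subgroup.centralizer_eq_comap_stabilizer]
      exact Nat.card_congr (Equiv.subtypeEquiv ConjAct.toConjAct.toEquiv fun x => Iff.rfl)
    have horbit_card : Nat.card (MulAction.orbit (ConjAct G) a) = S.index := by
      rw [Subgroup.index_eq_card]
      exact Nat.card_congr (MulAction.orbitEquivQuotientStabilizer (ConjAct G) a)
    have horbit_sub : MulAction.orbit (ConjAct G) a ⊆ (A : Set G) := by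
      rintro x ⟨g, rfl⟩
      exact hAn.conj_mem a haA (ConjAct.ofConjAct g)
    have horbit_le : Nat.card (MulAction.orbit (ConjAct G) a) ≤ Nat.card A := by
      have h1 : (MulAction.orbit (ConjAct G) a).ncard ≤ (A : Set G).ncard :=
        Set.ncard_le_ncard horbit_sub (Set.toFinite _)
      have h2 : Nat.card (MulAction.orbit (ConjAct G) a)
          = (MulAction.orbit (ConjAct G) a).ncard := Nat.card_coe_set_eq _
      have h3 : Nat.card A = (A : Set G).ncard := by
        rw [← Nat.card_coe_set_eq, SetLike.coe_sort_coe]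
      omega
    have hstab_le : Nat.card S ≤ Nat.card A := by
      rw [← hScard]
      exact Subgroup.card_le_of_le hcent_le
    have hcardConj : Nat.card (ConjAct G) = p ^ 5 := by
      rw [← hcardG]
      exact Nat.card_congr ConjAct.ofConjAct.toEquiv
    have hmul : Nat.card S * S.index = p ^ 5 := by
      rw [Subgroup.card_mul_index, hcardConj]
    have h1 : Nat.card S ≤ p ^ 2 := by rw [← hAcard]; exact hstab_le
    have h2 : S.index ≤ p ^ 2 := by
      rw [← horbit_card, ← hAcard]
      exact horbit_le
    have hcontr : p ^ 5 ≤ p ^ 4 := by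
      calc p ^ 5 = Nat.card S * S.index := hmul.symm
      _ ≤ p ^ 2 * p ^ 2 := Nat.mul_le_mul h1 h2
      _ = p ^ 4 := by ring
    have hlt : p ^ 4 < p ^ 5 := Nat.pow_lt_pow_right hp.one_lt (by norm_num)
    omega
end
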